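/- arXiv:0902.2090 — 6 statements merged into one kernel-verified Lean document; each statement's English description precedes it below -/
import Mathlib

section
/- Let n ≥ 2, m ∈ {1,…,n} and β > 1/m, and set σ(k) = H_m(k)^β for k in the open positive cone Γ₊ ⊂ ℝ^n. Then for every k ∈ Γ₊ one has Σ_{i=1}^n ∂σ/∂k_i(k) ≥ mβ · σ(k)^{1 − 1/(mβ)}. -/
/-!
Write `E_j` for the normalized elementary symmetric means of `k`, so `H_m = E_m`. Each
`j`-subset misses `n - j` indices, so `∑ᵢ ∂ᵢ e_{j+1} = (n - j) e_j`, i.e. `∑ᵢ ∂ᵢ E_m = m E_{m-1}`,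
and the chain rule gives `∑ᵢ ∂ᵢ σ = mβ H_m^{β-1} E_{m-1}`. Newton's inequalities
`E_j E_{j+2} ≤ E_{j+1}²`, proved by induction on the number of variables, yield Maclaurin's
inequality `H_m^{1 - 1/m} ≤ E_{m-1}`, hence `∑ᵢ ∂ᵢ σ ≥ mβ H_m^{β - 1/m} = mβ σ^{1 - 1/(mβ)}`
as `β > 0`.
-/

/-- The normalized `m`-th elementary symmetric polynomial (the `m`-th mean curvature). -/
noncomputable def Hm (n m : ℕ) (k : Fin n → ℝ) : ℝ :=
  ((Nat.factorial m * Nat.factorial (n - m) : ℕ) : ℝ) / (Nat.factorial n : ℝ) *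
    ∑ s ∈ Finset.powersetCard m Finset.univ, ∏ i ∈ s, k i

open Finset

noncomputable section

variable {ι : Type*}

def esymm (s : Finset ι) (k : ι → ℝ) (j : ℕ) : ℝ :=
  ∑ t ∈ s.powersetCard j, ∏ i ∈ t, k i

def esymmMean (s : Finset ι) (k : ι → ℝ) (j : ℕ) : ℝ :=
  esymm s k j / (#s).choose j

section Basic

variable {s : Finset ι} {k : ι → ℝ} {j : ℕ}

@[simp]
lemma esymm_zero (s : Finset ι) (k : ι → ℝ) : esymm s k 0 = 1 := by
  simp [esymm]

lemma esymm_eq_zero_of_card_lt (h : #s < j) (k : ι → ℝ) : esymm s k j = 0 := by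
  simp [esymm, powersetCard_eq_empty.2 h]

lemma esymm_nonneg (hk : ∀ i ∈ s, 0 ≤ k i) (j : ℕ) : 0 ≤ esymm s k j :=
  sum_nonneg fun _ ht => prod_nonneg fun i hi => hk i ((mem_powersetCard.1 ht).1 hi)

lemma esymm_pos (hk : ∀ i ∈ s, 0 < k i) (hj : j ≤ #s) : 0 < esymm s k j :=
  sum_pos (fun _ ht => prod_pos fun i hi => hk i ((mem_powersetCard.1 ht).1 hi))
    (powersetCard_nonempty.2 hj)

lemma esymm_insert [DecidableEq ι] {a : ι} (ha : a ∉ s) (k : ι → ℝ) (j : ℕ) :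
    esymm (insert a s) k (j + 1) = esymm s k (j + 1) + k a * esymm s k j := by
  have hnot : ∀ t ∈ s.powersetCard j, a ∉ t := fun t ht hat =>
    ha ((mem_powersetCard.1 ht).1 hat)
  rw [esymm, powersetCard_succ_insert ha, sum_union, sum_image, esymm, esymm, mul_sum]
  · exact congrArg _ (sum_congr rfl fun t ht => prod_insert (hnot t ht))
  · intro t ht u hu htu
    rw [← erase_insert (hnot t ht), ← erase_insert (hnot u hu), htu]
  · refine disjoint_right.2 fun t ht hts => ?_
    obtain ⟨u, -, rfl⟩ := mem_image.1 ht
    exact ha ((mem_powersetCard.1 hts).1 (mem_insert_self a u))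

@[simp]
lemma esymmMean_zero (s : Finset ι) (k : ι → ℝ) : esymmMean s k 0 = 1 := by
  simp [esymmMean]

lemma esymmMean_eq_zero_of_card_lt (h : #s < j) (k : ι → ℝ) : esymmMean s k j = 0 := by
  simp [esymmMean, esymm_eq_zero_of_card_lt h]

lemma esymmMean_nonneg (hk : ∀ i ∈ s, 0 ≤ k i) (j : ℕ) : 0 ≤ esymmMean s k j :=
  div_nonneg (esymm_nonneg hk j) (Nat.cast_nonneg _)

lemma esymmMean_pos (hk : ∀ i ∈ s, 0 < k i) (hj : j ≤ #s) : 0 < esymmMean s k j :=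
  div_pos (esymm_pos hk hj) (Nat.cast_pos.2 (Nat.choose_pos hj))

lemma card_add_one_sub_mul_esymmMean (s : Finset ι) (k : ι → ℝ) (j : ℕ) :
    ((#s : ℝ) + 1 - j) * esymmMean s k j = (#s + 1) * esymm s k j / (#s + 1).choose j := by
  rcases le_or_gt j #s with hj | hj
  · have hC : ((#s).choose j : ℝ) * (#s + 1) = (#s + 1).choose j * ((#s : ℝ) + 1 - j) := by
      have := congrArg (Nat.cast (R := ℝ)) (Nat.choose_mul_succ_eq #s j)
      push_cast [Nat.cast_sub (by omega : j ≤ #s + 1)] at this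
      exact this
    have h1 : ((#s).choose j : ℝ) ≠ 0 := by exact_mod_cast (Nat.choose_pos hj).ne'
    have h2 : ((#s + 1).choose j : ℝ) ≠ 0 := by exact_mod_cast (Nat.choose_pos (by omega)).ne'
    rw [esymmMean]
    field_simp
    linear_combination -esymm s k j * hC
  · simp [esymmMean, esymm_eq_zero_of_card_lt hj]

lemma add_one_mul_esymmMean (s : Finset ι) (k : ι → ℝ) (j : ℕ) :
    ((j : ℝ) + 1) * esymmMean s k j = (#s + 1) * esymm s k j / (#s + 1).choose (j + 1) := by
  rcases le_or_gt j #s with hj | hj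
  · have hC : (#s + 1 : ℝ) * (#s).choose j = (#s + 1).choose (j + 1) * ((j : ℝ) + 1) := by
      exact_mod_cast Nat.add_one_mul_choose_eq #s j
    have h1 : ((#s).choose j : ℝ) ≠ 0 := by exact_mod_cast (Nat.choose_pos hj).ne'
    have h2 : ((#s + 1).choose (j + 1) : ℝ) ≠ 0 := by
      exact_mod_cast (Nat.choose_pos (by omega)).ne'
    rw [esymmMean]
    field_simp
    linear_combination -esymm s k j * hC
  · simp [esymmMean, esymm_eq_zero_of_card_lt hj]

lemma card_add_one_mul_esymmMean_insert [DecidableEq ι] {a : ι} (ha : a ∉ s) (k : ι → ℝ)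
    (j : ℕ) : ((#s : ℝ) + 1) * esymmMean (insert a s) k j =
      ((#s : ℝ) + 1 - j) * esymmMean s k j + j * k a * esymmMean s k (j - 1) := by
  cases j with
  | zero => simp
  | succ i =>
    rw [card_add_one_sub_mul_esymmMean, Nat.add_sub_cancel, Nat.cast_succ,
      mul_comm _ (k a), mul_assoc, add_one_mul_esymmMean, esymmMean, card_insert_of_notMem ha,
      esymm_insert ha]
    ring

end Basic

/-- With `a, b, c, d = E_{j-1}, …, E_{j+2}` of `s`, `t = k x`, `p = #s - j` and `q = j`, the three
factors are `#s + 1` times `E_j`, `E_{j+1}`, `E_{j+2}` of `insert x s`. -/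
lemma newton_step {a b c d t p q : ℝ} (ht : 0 ≤ t) (hp : 1 ≤ p) (hq : 0 ≤ q)
    (hac : q * (a * c) ≤ q * b ^ 2) (hbd : b * d ≤ c ^ 2) (had : q * (a * d) ≤ q * (b * c)) :
    ((p + 1) * b + q * t * a) * ((p - 1) * d + (q + 2) * t * c) ≤
      (p * c + (q + 1) * t * b) ^ 2 := by
  nlinarith [mul_nonneg (by nlinarith : 0 ≤ p ^ 2 - 1) (sub_nonneg.2 hbd),
    mul_nonneg (mul_nonneg ht (sub_nonneg.2 hp)) (sub_nonneg.2 had),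
    mul_nonneg (mul_nonneg (by linarith : 0 ≤ q + 2) (sq_nonneg t)) (sub_nonneg.2 hac),
    sq_nonneg (c - t * b)]

theorem esymmMean_mul_le_sq {s : Finset ι} {k : ι → ℝ} (hk : ∀ i ∈ s, 0 < k i) (j : ℕ) :
    esymmMean s k j * esymmMean s k (j + 2) ≤ esymmMean s k (j + 1) ^ 2 := by
  classical
  induction s using Finset.induction_on generalizing j with
  | empty =>
    rw [esymmMean_eq_zero_of_card_lt (s := ∅) (j := j + 2) (by simp), mul_zero]
    positivity
  | insert x s hx ih =>
    have hks : ∀ i ∈ s, 0 < k i := fun i hi => hk i (mem_insert_of_mem hi)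
    rcases lt_or_ge #s (j + 1) with hj | hj
    · rw [esymmMean_eq_zero_of_card_lt (j := j + 2) (by rw [card_insert_of_notMem hx]; omega),
        mul_zero]
      positivity
    set a := esymmMean s k (j - 1)
    set b := esymmMean s k j
    set c := esymmMean s k (j + 1)
    set d := esymmMean s k (j + 2)
    have hb : 0 < b := esymmMean_pos hks (by omega)
    have hc : 0 < c := esymmMean_pos hks hj
    have hbd : b * d ≤ c ^ 2 := ih hks j
    have hprev : (j : ℝ) * (a * c) ≤ j * b ^ 2 ∧ (j : ℝ) * (a * d) ≤ j * (b * c) := by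
      cases j with
      | zero => simp
      | succ i =>
        have hac : a * c ≤ b ^ 2 := ih hks i
        have hd : 0 ≤ d := esymmMean_nonneg (fun i hi => (hks i hi).le) _
        -- `(a d) (b c) = (a c) (b d) ≤ (b c) ^ 2`
        have had : a * d ≤ b * c := by nlinarith [mul_pos hb hc, mul_nonneg hb.le hd]
        exact ⟨by gcongr, by gcongr⟩
    have key := newton_step (a := a) (b := b) (c := c) (d := d) (p := (#s : ℝ) - j) (q := j)
      (hk x (mem_insert_self x s)).le (by rw [le_sub_iff_add_le, add_comm]; exact_mod_cast hj)
      (Nat.cast_nonneg j) hprev.1 hbd hprev.2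
    have hrec := card_add_one_mul_esymmMean_insert hx k
    have hN : 0 < ((#s : ℝ) + 1) ^ 2 := by positivity
    refine le_of_mul_le_mul_left ?_ hN
    calc _ = ((#s + 1) * esymmMean (insert x s) k j) *
            ((#s + 1) * esymmMean (insert x s) k (j + 2)) := by ring
      _ ≤ ((#s + 1) * esymmMean (insert x s) k (j + 1)) ^ 2 := by
        rw [hrec, hrec, hrec]
        push_cast
        linarith [key]
      _ = _ := by ring

theorem esymmMean_succ_pow_le {s : Finset ι} {k : ι → ℝ} (hk : ∀ i ∈ s, 0 < k i) (j : ℕ) :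
    esymmMean s k (j + 1) ^ j ≤ esymmMean s k j ^ (j + 1) := by
  have hk0 : ∀ i ∈ s, 0 ≤ k i := fun i hi => (hk i hi).le
  induction j with
  | zero => simp
  | succ j ih =>
    rcases lt_or_ge #s (j + 2) with hj | hj
    · rw [esymmMean_eq_zero_of_card_lt hj, zero_pow (Nat.succ_ne_zero j)]
      exact pow_nonneg (esymmMean_nonneg hk0 _) _
    have hc : 0 < esymmMean s k (j + 1) := esymmMean_pos hk (by omega)
    refine le_of_mul_le_mul_right ?_ (pow_pos hc j)
    calc esymmMean s k (j + 2) ^ (j + 1) * esymmMean s k (j + 1) ^ j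
        ≤ esymmMean s k (j + 2) ^ (j + 1) * esymmMean s k j ^ (j + 1) := by
          gcongr
          exact pow_nonneg (esymmMean_nonneg hk0 _) _
      _ = (esymmMean s k j * esymmMean s k (j + 2)) ^ (j + 1) := by ring
      _ ≤ (esymmMean s k (j + 1) ^ 2) ^ (j + 1) := by
          gcongr
          · exact mul_nonneg (esymmMean_nonneg hk0 _) (esymmMean_nonneg hk0 _)
          · exact esymmMean_mul_le_sq hk j
      _ = esymmMean s k (j + 1) ^ (j + 1 + 1) * esymmMean s k (j + 1) ^ j := by ring

theorem esymmMean_succ_rpow_le {s : Finset ι} {k : ι → ℝ} (hk : ∀ i ∈ s, 0 < k i) (j : ℕ) :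
    esymmMean s k (j + 1) ^ (1 - 1 / ((j : ℝ) + 1)) ≤ esymmMean s k j := by
  have hk0 : ∀ i ∈ s, 0 ≤ k i := fun i hi => (hk i hi).le
  have hx := esymmMean_nonneg hk0 (j + 1)
  have hy := esymmMean_nonneg hk0 j
  have hexp : (1 - 1 / ((j : ℝ) + 1)) = (j : ℝ) * ((j + 1 : ℕ) : ℝ)⁻¹ := by
    push_cast
    field_simp
    ring
  rw [hexp, Real.rpow_mul hx, Real.rpow_natCast,
    ← Real.pow_rpow_inv_natCast hy (Nat.succ_ne_zero j)]
  gcongr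
  exact esymmMean_succ_pow_le hk j

section Derivative

variable [DecidableEq ι]

lemma sum_sum_prod_erase (s : Finset ι) (k : ι → ℝ) (j : ℕ) :
    ∑ t ∈ s.powersetCard (j + 1), ∑ i ∈ t, ∏ l ∈ t.erase i, k l =
      (#s - j : ℕ) * esymm s k j := by
  have hcount : (#s - j : ℕ) * esymm s k j =
      ∑ t ∈ s.powersetCard j, ∑ _i ∈ s \ t, ∏ l ∈ t, k l := by
    rw [esymm, mul_sum]
    refine sum_congr rfl fun t ht => ?_
    obtain ⟨hts, rfl⟩ := mem_powersetCard.1 ht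
    rw [sum_const, card_sdiff_of_subset hts, nsmul_eq_mul]
  rw [hcount, sum_sigma', sum_sigma']
  refine sum_nbij' (fun x => ⟨x.1.erase x.2, x.2⟩) (fun y => ⟨insert y.2 y.1, y.2⟩)
    ?_ ?_ ?_ ?_ (fun x _ => rfl)
  · rintro ⟨t, i⟩ h
    simp only [mem_sigma, mem_powersetCard, mem_sdiff] at h ⊢
    refine ⟨⟨(erase_subset i t).trans h.1.1, ?_⟩, h.1.1 h.2, notMem_erase i t⟩
    rw [card_erase_of_mem h.2, h.1.2, Nat.add_sub_cancel]
  · rintro ⟨t, i⟩ h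
    simp only [mem_sigma, mem_powersetCard, mem_sdiff] at h ⊢
    refine ⟨⟨insert_subset h.2.1 h.1.1, ?_⟩, mem_insert_self i t⟩
    rw [card_insert_of_notMem h.2.2, h.1.2]
  · rintro ⟨t, i⟩ h
    simp only [mem_sigma] at h
    simp [insert_erase h.2]
  · rintro ⟨t, i⟩ h
    simp only [mem_sigma, mem_sdiff] at h
    simp [erase_insert h.2.2]

variable [Fintype ι]

lemma hasFDerivAt_esymm (k : ι → ℝ) (j : ℕ) :
    HasFDerivAt (fun k => esymm univ k j)
      (∑ t ∈ univ.powersetCard j, ∑ i ∈ t,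
        (∏ l ∈ t.erase i, k l) • ContinuousLinearMap.proj (R := ℝ) (φ := fun _ : ι => ℝ) i) k :=
  HasFDerivAt.fun_sum fun _ _ => HasFDerivAt.finsetProd fun i _ => hasFDerivAt_apply i k

lemma fderiv_esymm_apply_one (k : ι → ℝ) (j : ℕ) :
    fderiv ℝ (fun k => esymm univ k (j + 1)) k (fun _ => 1) =
      (Fintype.card ι - j : ℕ) * esymm univ k j := by
  rw [(hasFDerivAt_esymm k (j + 1)).fderiv, ← card_univ, ← sum_sum_prod_erase]
  simp

lemma differentiable_esymm (j : ℕ) : Differentiable ℝ (fun k : ι → ℝ => esymm univ k j) :=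
  fun k => (hasFDerivAt_esymm k j).differentiableAt

lemma differentiable_esymmMean (j : ℕ) :
    Differentiable ℝ (fun k : ι → ℝ => esymmMean univ k j) := by
  simp only [esymmMean, div_eq_inv_mul]
  exact (differentiable_esymm j).const_mul _

lemma fderiv_esymmMean_apply_one (k : ι → ℝ) {j : ℕ} (hj : j + 1 ≤ Fintype.card ι) :
    fderiv ℝ (fun k => esymmMean univ k (j + 1)) k (fun _ => 1) =
      (j + 1) * esymmMean univ k j := by
  have hC : ((Fintype.card ι).choose (j + 1) : ℝ) * (j + 1) =
      (Fintype.card ι).choose j * (Fintype.card ι - j : ℕ) := by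
    exact_mod_cast Nat.choose_succ_right_eq (Fintype.card ι) j
  have h1 : ((Fintype.card ι).choose (j + 1) : ℝ) ≠ 0 := by
    exact_mod_cast (Nat.choose_pos hj).ne'
  have h2 : ((Fintype.card ι).choose j : ℝ) ≠ 0 := by
    exact_mod_cast (Nat.choose_pos (by omega)).ne'
  simp only [esymmMean, card_univ, div_eq_inv_mul]
  rw [fderiv_const_mul (differentiable_esymm _ k), smul_apply,
    fderiv_esymm_apply_one, smul_eq_mul]
  field_simp
  linear_combination -esymm univ k j * hC

lemma sum_fderiv_esymmMean_rpow_apply_single (β : ℝ) {k : ι → ℝ} (hk : ∀ i, 0 < k i) {j : ℕ}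
    (hj : j + 1 ≤ Fintype.card ι) :
    ∑ i, fderiv ℝ (fun k => esymmMean univ k (j + 1) ^ β) k (Pi.single i 1) =
      β * esymmMean univ k (j + 1) ^ (β - 1) * ((j + 1) * esymmMean univ k j) := by
  have hpos : 0 < esymmMean univ k (j + 1) :=
    esymmMean_pos (fun i _ => hk i) (by rwa [card_univ])
  rw [← fderiv_esymmMean_apply_one k hj, ← smul_eq_mul, ← smul_apply,
    ← ((differentiable_esymmMean _ k).hasFDerivAt.rpow_const (Or.inl hpos.ne')).fderiv,
    ← map_sum, LinearMap.sum_single_apply]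

end Derivative

lemma Hm_eq_esymmMean {n m : ℕ} (hmn : m ≤ n) (k : Fin n → ℝ) :
    Hm n m k = esymmMean univ k m := by
  rw [Hm, esymmMean, esymm, card_univ, Fintype.card_fin, Nat.cast_choose ℝ hmn, Nat.cast_mul,
    div_div_eq_mul_div]
  ring

end

theorem stmt2_general (n m : ℕ) (β : ℝ) (hm1 : 1 ≤ m) (hmn : m ≤ n)
    (hβ : 1 / (m : ℝ) < β) (k : Fin n → ℝ) (hk : ∀ i, 0 < k i) :
    (m : ℝ) * β * (Hm n m k ^ β) ^ (1 - 1 / ((m : ℝ) * β)) ≤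
      ∑ i, fderiv ℝ (fun k => Hm n m k ^ β) k (Pi.single i 1) := by
  obtain ⟨j, rfl⟩ : ∃ j, m = j + 1 := ⟨m - 1, by omega⟩
  have hj : j + 1 ≤ Fintype.card (Fin n) := by rwa [Fintype.card_fin]
  have hβ0 : 0 < β := lt_trans (by positivity) hβ
  have hH : 0 < esymmMean univ k (j + 1) :=
    esymmMean_pos (fun i _ => hk i) (by rwa [card_univ])
  simp only [Hm_eq_esymmMean hmn]
  rw [sum_fderiv_esymmMean_rpow_apply_single β hk hj]
  push_cast
  calc ((j : ℝ) + 1) * β * (esymmMean univ k (j + 1) ^ β) ^ (1 - 1 / (((j : ℝ) + 1) * β))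
      = ((j : ℝ) + 1) * β * esymmMean univ k (j + 1) ^ (β - 1) *
          esymmMean univ k (j + 1) ^ (1 - 1 / ((j : ℝ) + 1)) := by
        rw [← Real.rpow_mul hH.le, mul_assoc _ (_ ^ (β - 1)), ← Real.rpow_add hH]
        congr 2
        field_simp
        ring
    _ ≤ ((j : ℝ) + 1) * β * esymmMean univ k (j + 1) ^ (β - 1) * esymmMean univ k j := by
        gcongr
        exact esymmMean_succ_rpow_le (fun i _ => hk i) j
    _ = β * esymmMean univ k (j + 1) ^ (β - 1) * ((j + 1) * esymmMean univ k j) := by ring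

/-- Let `σ(k) = H_m(k)^β` with `β > 1/m`.  Then for every `k` in the open positive cone,
`Σ_i ∂σ/∂k_i(k) ≥ mβ · σ(k)^(1 - 1/(mβ))`. -/
theorem stmt2 (n m : ℕ) (β : ℝ) (hn : 2 ≤ n) (hm1 : 1 ≤ m) (hmn : m ≤ n)
    (hβ : 1 / (m : ℝ) < β) (k : Fin n → ℝ) (hk : ∀ i, 0 < k i) :
    (m : ℝ) * β * (Hm n m k ^ β) ^ (1 - 1 / ((m : ℝ) * β)) ≤
      ∑ i, fderiv ℝ (fun k => Hm n m k ^ β) k (Pi.single i 1) :=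
  stmt2_general n m β hm1 hmn hβ k hk
end

section
/- For every integer n ≥ 2 and every ε > 0 there exists δ = δ(ε,n) > 0 with the following property: if k = (k_1,…,k_n) ∈ ℝ^n satisfies min_i k_i ≥ ε·H(k) and H(k) > 0, then (n·Σ_i k_i² − H(k)²)/H(k)² ≥ δ·(1/nⁿ − K(k)/H(k)ⁿ). -/
/-!
After scaling to `H(k) = 1`, put `u_i = n k_i ≥ n ε`, so that `∑ (u_i - 1) = 0`. The bound
`log u ≥ (u - 1) - (u - 1)² / (n ε)`, valid for `u ≥ n ε`, summed and exponentiated gives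
`nⁿ K ≥ 1 - ∑ (u_i - 1)² / (n ε) = 1 - (n ∑ k_i² - 1) / ε`. Hence `δ = ε` works.
-/

open Finset Real

lemma Real.sub_one_sub_sq_div_le_log {a u : ℝ} (ha : 0 < a) (hau : a ≤ u) :
    u - 1 - (u - 1) ^ 2 / a ≤ log u := by
  have hu : 0 < u := ha.trans_le hau
  calc u - 1 - (u - 1) ^ 2 / a ≤ u - 1 - (u - 1) ^ 2 / u := by gcongr
    _ = 1 - u⁻¹ := by field_simp; ring
    _ ≤ log u := one_sub_inv_le_log_of_pos hu

lemma Real.one_sub_sum_sq_div_le_prod {ι : Type*} [Fintype ι] {a : ℝ} {u : ι → ℝ}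
    (ha : 0 < a) (hau : ∀ i, a ≤ u i) (hsum : ∑ i, (u i - 1) = 0) :
    1 - (∑ i, (u i - 1) ^ 2) / a ≤ ∏ i, u i := by
  set D := (∑ i, (u i - 1) ^ 2) / a
  have hlog : -D ≤ ∑ i, log (u i) := calc
    -D = ∑ i, (u i - 1 - (u i - 1) ^ 2 / a) := by rw [sum_sub_distrib, hsum, ← sum_div]; ring
    _ ≤ ∑ i, log (u i) := sum_le_sum fun i _ ↦ sub_one_sub_sq_div_le_log ha (hau i)
  calc 1 - D ≤ exp (-D) := by linarith [add_one_le_exp (-D)]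
    _ ≤ exp (∑ i, log (u i)) := exp_le_exp.2 hlog
    _ = ∏ i, u i := by
      rw [exp_sum]
      exact prod_congr rfl fun i _ ↦ exp_log (ha.trans_le (hau i))

section Normalized

variable {ι : Type*} [Fintype ι] {ε : ℝ} {x : ι → ℝ}

lemma one_sub_card_pow_mul_prod_le (hε : 0 < ε) (hx1 : ∑ i, x i = 1) (hxε : ∀ i, ε ≤ x i) :
    ε * (1 - (Fintype.card ι : ℝ) ^ Fintype.card ι * ∏ i, x i) ≤
      Fintype.card ι * ∑ i, x i ^ 2 - 1 := by
  set n : ℝ := (Fintype.card ι : ℝ)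
  have hn : 0 < n := by
    obtain ⟨i, -, -⟩ := exists_ne_zero_of_sum_ne_zero (hx1.trans_ne one_ne_zero)
    exact Nat.cast_pos.2 (Fintype.card_pos_iff.2 ⟨i⟩)
  have hsum : ∑ i, (n * x i - 1) = 0 := by
    simp [sum_sub_distrib, ← mul_sum, hx1, n]
  have hsq : ∑ i, (n * x i - 1) ^ 2 = n * (n * ∑ i, x i ^ 2 - 1) := by
    simp only [sub_sq, sum_add_distrib, sum_sub_distrib, mul_pow, ← mul_sum, mul_assoc, ← sum_mul,
      hx1]
    simp [n]; ring
  have key := one_sub_sum_sq_div_le_prod (mul_pos hn hε)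
    (fun i ↦ mul_le_mul_of_nonneg_left (hxε i) hn.le) hsum
  rw [hsq, prod_mul_distrib, prod_const, card_univ, mul_div_mul_left _ _ hn.ne'] at key
  exact (le_div_iff₀' hε).1 (by linarith)

lemma inv_card_pow_sub_prod_le (hε : 0 < ε) (hx1 : ∑ i, x i = 1) (hxε : ∀ i, ε ≤ x i) :
    ε * (1 / (Fintype.card ι : ℝ) ^ Fintype.card ι - ∏ i, x i) ≤
      Fintype.card ι * ∑ i, x i ^ 2 - 1 := by
  have hN : 1 ≤ (Fintype.card ι : ℝ) ^ Fintype.card ι :=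
    mod_cast Nat.one_le_iff_ne_zero.2 (by simp)
  set n : ℝ := (Fintype.card ι : ℝ)
  have hvar : 0 ≤ n * ∑ i, x i ^ 2 - 1 := by
    have := sq_sum_le_card_mul_sum_sq (s := univ) (f := x)
    rw [hx1, card_univ] at this
    linarith
  calc ε * (1 / n ^ Fintype.card ι - ∏ i, x i)
      = ε * (1 - n ^ Fintype.card ι * ∏ i, x i) / n ^ Fintype.card ι := by field_simp
    _ ≤ (n * ∑ i, x i ^ 2 - 1) / n ^ Fintype.card ι := by
      gcongr; exact one_sub_card_pow_mul_prod_le hε hx1 hxε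
    _ ≤ n * ∑ i, x i ^ 2 - 1 := div_le_self hvar hN

end Normalized

theorem stmt4_general (n : ℕ) (ε : ℝ) (hε : 0 < ε) :
    ∃ δ > (0 : ℝ), ∀ k : Fin n → ℝ,
      (∀ i, ε * (∑ j, k j) ≤ k i) → 0 < ∑ j, k j →
      δ * (1 / (n : ℝ) ^ n - (∏ i, k i) / (∑ i, k i) ^ n) ≤
        ((n : ℝ) * ∑ i, (k i) ^ 2 - (∑ i, k i) ^ 2) / (∑ i, k i) ^ 2 := by
  refine ⟨ε, hε, fun k hk hH ↦ ?_⟩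
  set H := ∑ j, k j
  have hsum_one : ∑ i, k i / H = 1 := by rw [← sum_div, div_self hH.ne']
  have hle : ∀ i, ε ≤ k i / H := fun i ↦ (le_div_iff₀ hH).2 (hk i)
  have hprod : (∏ i, k i) / H ^ n = ∏ i, k i / H := by
    rw [prod_div_distrib, prod_const, card_univ, Fintype.card_fin]
  have hsq : ((n : ℝ) * ∑ i, k i ^ 2 - H ^ 2) / H ^ 2 = n * ∑ i, (k i / H) ^ 2 - 1 := by
    simp only [div_pow, ← sum_div]
    field_simp
  rw [hprod, hsq]
  simpa using inv_card_pow_sub_prod_le hε hsum_one hle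

/-- Schulze's algebraic lemma: for every integer `n ≥ 2` and `ε > 0` there exists
`δ = δ(ε,n) > 0` such that whenever `k ∈ ℝ^n` satisfies `min_i k_i ≥ ε·H(k)` and
`H(k) > 0` (with `H(k) = Σ_i k_i`, `K(k) = Π_i k_i`), one has
`(n·Σ_i k_i² − H²)/H² ≥ δ·(1/nⁿ − K/Hⁿ)`. -/
theorem stmt4 (n : ℕ) (hn : 2 ≤ n) (ε : ℝ) (hε : 0 < ε) :
    ∃ δ > (0 : ℝ), ∀ k : Fin n → ℝ,
      (∀ i, ε * (∑ j, k j) ≤ k i) → 0 < ∑ j, k j →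
      δ * (1 / (n : ℝ) ^ n - (∏ i, k i) / (∑ i, k i) ^ n) ≤
        ((n : ℝ) * ∑ i, (k i) ^ 2 - (∑ i, k i) ^ 2) / (∑ i, k i) ^ 2 :=
  stmt4_general n ε hε
end

section
/- Let n ≥ 2, let ε > 0, let A be a real symmetric n×n matrix with tr A > 0 such that A − ε·(tr A)·I is positive semidefinite, and let T : {1,…,n}³ → ℝ be totally symmetric (invariant under all permutations of its three indices). Set H = tr A and U_i = Σ_p T_{ipp}. Then ε ≤ 1/n and Σ_{i,j,l} (H·T_{ijl} − A_{jl}·U_i)² ≥ ((n−1)/2)·ε²·H²·Σ_{i,j,l} T_{ijl}². -/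
/-!
Diagonalize `A = O diag(d) Oᵀ` with `O` orthogonal and rotate `T` into the eigenbasis: both sides
are invariant, the pinching becomes `d b ≥ εH`, and `∑ d = H ≥ nεH` gives `ε ≤ 1/n`.
In the eigenbasis the defect splits into `H² ∑_{b ≠ c} T_abc²` and, for each `a`, the diagonal
part `∑_b (H x_b - d_b u)²` with `x_b = T_abb`, `u = ∑ x`. Since `(p - q)² + p² ≥ q²/2`, paying
`H² x_b²` for each `b ≠ a` leaves `u² ∑_{b≠a} d_b² / 2 ≥ (n-1)ε²H²u²/2`; together with the term
`b = a` this is a quadratic form in `(x_a, u)` that dominates `(n-1)ε²H² x_a²/2` because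
`d_a ≤ (1 - (n-1)ε)H`. By total symmetry the total price `H² ∑_{a ≠ b} T_abb²` is at most half
of the off-diagonal part, which therefore still covers the remaining entries of `T`.
-/

open Finset Matrix

theorem sum_sum_sum_comm {α β γ M : Type*} [Fintype α] [Fintype β] [Fintype γ]
    [AddCommMonoid M] (f : α → β → γ → M) :
    ∑ i, ∑ j, ∑ l, f i j l = ∑ l, ∑ j, ∑ i, f i j l :=
  sum_comm.trans <| (sum_congr rfl fun _ _ => sum_comm).trans sum_comm

section Diagonalization

variable {ι : Type*} [Fintype ι] [DecidableEq ι]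

theorem Matrix.IsSymm.exists_orthogonal_diagonalization {A : Matrix ι ι ℝ} (hA : A.IsSymm) :
    ∃ (O : Matrix ι ι ℝ) (d : ι → ℝ), O * Oᵀ = 1 ∧ Oᵀ * O = 1 ∧ Oᵀ * A * O = diagonal d := by
  have hH : A.IsHermitian := by
    rw [IsHermitian, conjTranspose_eq_transpose_of_trivial]
    exact hA
  have hU := hH.eigenvectorUnitary.2
  have hstar : star (hH.eigenvectorUnitary : Matrix ι ι ℝ) = (hH.eigenvectorUnitary)ᵀ := by
    rw [star_eq_conjTranspose, conjTranspose_eq_transpose_of_trivial]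
  refine ⟨hH.eigenvectorUnitary, hH.eigenvalues, ?_, ?_, ?_⟩
  · rw [← hstar]; exact mem_unitaryGroup_iff.mp hU
  · rw [← hstar]; exact mem_unitaryGroup_iff'.mp hU
  · rw [← hstar]; simpa using hH.conjStarAlgAut_star_eigenvectorUnitary

theorem le_diagonal_of_posSemidef_sub_smul {A O : Matrix ι ι ℝ} {d : ι → ℝ} {c : ℝ}
    (hpin : (A - c • 1).PosSemidef) (hO : Oᵀ * O = 1) (hd : Oᵀ * A * O = diagonal d) (b : ι) :
    c ≤ d b := by
  have h := (hpin.conjTranspose_mul_mul_same O).diag_nonneg (i := b)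
  simp only [conjTranspose_eq_transpose_of_trivial, mul_sub, sub_mul, hd, Matrix.mul_smul,
    Matrix.smul_mul, Matrix.mul_one, hO] at h
  simpa using h

theorem sum_eq_trace_of_conj_eq_diagonal {A O : Matrix ι ι ℝ} {d : ι → ℝ}
    (hO : O * Oᵀ = 1) (hd : Oᵀ * A * O = diagonal d) : ∑ b, d b = A.trace := by
  rw [← trace_diagonal, ← hd, trace_mul_cycle, hO, one_mul]

end Diagonalization

namespace Tensor3

variable {ι : Type*} [Fintype ι] {O : Matrix ι ι ℝ}

/-- Applies `Oᵀ` to the first slot and moves it to the last, so that three turns apply `Oᵀ` to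
every slot (`rotate_apply`) while each turn visibly preserves the sum of squares. -/
def turn (O : Matrix ι ι ℝ) (R : ι → ι → ι → ℝ) : ι → ι → ι → ℝ :=
  fun b c => (fun i => R i b c) ᵥ* O

def rotate (O : Matrix ι ι ℝ) (R : ι → ι → ι → ℝ) : ι → ι → ι → ℝ :=
  turn O (turn O (turn O R))

theorem rotate_apply (R : ι → ι → ι → ℝ) (a b c : ι) :
    rotate O R a b c = ∑ i, ∑ j, ∑ l, R i j l * O i a * O j b * O l c := by
  simp only [rotate, turn, vecMul, dotProduct, sum_mul]
  rw [sum_sum_sum_comm]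

theorem rotate_swap₁₂ {R : ι → ι → ι → ℝ} (hR : ∀ i j l, R i j l = R j i l) (a b c : ι) :
    rotate O R a b c = rotate O R b a c := by
  rw [rotate_apply, rotate_apply, sum_comm]
  exact sum_congr rfl fun j _ => sum_congr rfl fun i _ => sum_congr rfl fun l _ => by
    rw [hR]; ring

theorem rotate_swap₂₃ {R : ι → ι → ι → ℝ} (hR : ∀ i j l, R i j l = R i l j) (a b c : ι) :
    rotate O R a b c = rotate O R a c b := by
  rw [rotate_apply, rotate_apply]
  refine sum_congr rfl fun i _ => ?_
  rw [sum_comm]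
  exact sum_congr rfl fun l _ => sum_congr rfl fun j _ => by rw [hR]; ring

theorem rotate_mul_sub (H : ℝ) (R S : ι → ι → ι → ℝ) (a b c : ι) :
    rotate O (fun i j l => H * R i j l - S i j l) a b c =
      H * rotate O R a b c - rotate O S a b c := by
  simp only [rotate_apply, sub_mul, sum_sub_distrib, mul_sum, mul_assoc]

theorem rotate_mul_outer (M : Matrix ι ι ℝ) (u : ι → ℝ) (a b c : ι) :
    rotate O (fun i j l => M j l * u i) a b c = (Oᵀ * M * O) b c * (u ᵥ* O) a := by
  simp only [rotate_apply, vecMul, dotProduct, mul_apply, transpose_apply, sum_mul, mul_sum]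
  refine sum_congr rfl fun i _ => ?_
  rw [sum_comm]
  exact sum_congr rfl fun l _ => sum_congr rfl fun j _ => by ring

variable [DecidableEq ι]

theorem sum_vecMul_sq (hO : O * Oᵀ = 1) (v : ι → ℝ) : ∑ a, (v ᵥ* O) a ^ 2 = ∑ i, v i ^ 2 := by
  have key : (v ᵥ* O) ⬝ᵥ (v ᵥ* O) = v ⬝ᵥ v := by
    rw [← dotProduct_mulVec, ← mulVec_transpose, mulVec_mulVec, hO, one_mulVec]
  simpa only [dotProduct, sq] using key

theorem sum_sq_turn (hO : O * Oᵀ = 1) (R : ι → ι → ι → ℝ) :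
    ∑ a, ∑ b, ∑ c, turn O R a b c ^ 2 = ∑ a, ∑ b, ∑ c, R a b c ^ 2 := by
  simp only [turn, sum_vecMul_sq hO]
  exact (sum_congr rfl fun _ _ => sum_comm).trans sum_comm

theorem sum_sq_rotate (hO : O * Oᵀ = 1) (R : ι → ι → ι → ℝ) :
    ∑ a, ∑ b, ∑ c, rotate O R a b c ^ 2 = ∑ a, ∑ b, ∑ c, R a b c ^ 2 := by
  simp only [rotate, sum_sq_turn hO]

theorem sum_rotate_diag (hO : O * Oᵀ = 1) (R : ι → ι → ι → ℝ) (a : ι) :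
    ∑ p, rotate O R a p p = ((fun i => ∑ p, R i p p) ᵥ* O) a := by
  have hOO : ∀ j l, ∑ p, O j p * O l p = if j = l then 1 else 0 := fun j l => by
    simpa [mul_apply, one_apply] using congrFun (congrFun hO j) l
  simp only [rotate_apply, vecMul, dotProduct, sum_mul]
  rw [sum_comm]
  refine sum_congr rfl fun i _ => ?_
  rw [sum_comm]
  refine sum_congr rfl fun j _ => ?_
  rw [sum_comm]
  have h : ∀ l, ∑ p, R i j l * O i a * O j p * O l p =
      R i j l * O i a * if j = l then 1 else 0 := fun l => by
    rw [← hOO, mul_sum]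
    exact sum_congr rfl fun p _ => by ring
  simp [h]

end Tensor3

open Tensor3

section PinchingEstimate

variable {ι : Type*} [Fintype ι]

/-- The tensor `H ∇α - α ∇H`, with `A` for `α`, `T` for `∇α` and `∑ p, T i p p` for `∇_i H`. -/
def gradientDefect (H : ℝ) (A : Matrix ι ι ℝ) (T : ι → ι → ι → ℝ) : ι → ι → ι → ℝ :=
  fun i j l => H * T i j l - A j l * ∑ p, T i p p

theorem card_mul_le_one_of_pinched {ε H : ℝ} {d : ι → ℝ} (hH : 0 < H)
    (hd : ∀ b, ε * H ≤ d b) (hsum : ∑ b, d b = H) : (Fintype.card ι : ℝ) * ε ≤ 1 := by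
  have h := sum_le_sum fun b (_ : b ∈ univ) => hd b
  rw [sum_const, card_univ, nsmul_eq_mul, hsum, ← mul_assoc] at h
  exact le_of_mul_le_mul_right (by linarith) hH

variable [DecidableEq ι]

theorem rotate_gradientDefect {O : Matrix ι ι ℝ} (hO : O * Oᵀ = 1) (H : ℝ) (A : Matrix ι ι ℝ)
    (T : ι → ι → ι → ℝ) :
    rotate O (gradientDefect H A T) = gradientDefect H (Oᵀ * A * O) (rotate O T) := by
  funext a b c
  unfold gradientDefect
  rw [rotate_mul_sub, rotate_mul_outer, sum_rotate_diag hO]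

theorem cast_card_sub_one_mul_le_sum_erase {f : ι → ℝ} {c : ℝ} (h : ∀ b, c ≤ f b) (a : ι) :
    ((Fintype.card ι : ℝ) - 1) * c ≤ ∑ b ∈ univ.erase a, f b := by
  calc ((Fintype.card ι : ℝ) - 1) * c = ∑ b ∈ univ.erase a, c := by
        rw [sum_const, card_erase_of_mem (mem_univ a), nsmul_eq_mul, card_univ,
          Nat.cast_pred (Fintype.card_pos_iff.2 ⟨a⟩)]
    _ ≤ _ := sum_le_sum fun b _ => h b

section PinchedSpectrum

variable {ε H : ℝ} {d : ι → ℝ}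

theorem two_mul_le_sum_erase_sq_of_pinched (hε : 0 < ε) (hH : 0 < H) (hd : ∀ b, ε * H ≤ d b)
    (a : ι) :
    2 * (((Fintype.card ι : ℝ) - 1) / 2 * ε ^ 2 * H ^ 2) ≤ ∑ b ∈ univ.erase a, d b ^ 2 := by
  have h := cast_card_sub_one_mul_le_sum_erase
    (fun b => pow_le_pow_left₀ (mul_pos hε hH).le (hd b) 2) a
  linarith [h, mul_pow ε H 2]

theorem sq_add_le_of_pinched (hε : 0 < ε) (hH : 0 < H) (hd : ∀ b, ε * H ≤ d b)
    (hsum : ∑ b, d b = H) (a : ι) :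
    d a ^ 2 + ((Fintype.card ι : ℝ) - 1) / 2 * ε ^ 2 * H ^ 2 ≤ H ^ 2 := by
  have hcard := card_mul_le_one_of_pinched hH hd hsum
  have hm : (1 : ℝ) ≤ Fintype.card ι := by exact_mod_cast Fintype.card_pos_iff.2 ⟨a⟩
  have hlow : 0 ≤ d a := (mul_pos hε hH).le.trans (hd a)
  have hup : d a ≤ H - ((Fintype.card ι : ℝ) - 1) * (ε * H) := by
    have h := add_sum_erase univ d (mem_univ a)
    rw [hsum] at h
    linarith [cast_card_sub_one_mul_le_sum_erase hd a]
  nlinarith [pow_le_pow_left₀ hlow hup 2, mul_nonneg (mul_nonneg (sub_nonneg.2 hm) hε.le)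
    (mul_nonneg (sq_nonneg H) (by linarith : (0 : ℝ) ≤ 2 - (Fintype.card ι - 1) * ε - ε / 2))]

end PinchedSpectrum

theorem mul_sq_le_sq_sub_add_mul_sq {H μ k x u : ℝ} (hk : 0 ≤ k) (hμ : μ ^ 2 + k ≤ H ^ 2) :
    k * x ^ 2 ≤ (H * x - μ * u) ^ 2 + k * u ^ 2 := by
  rcases (add_nonneg (sq_nonneg μ) hk).eq_or_lt with hs | hs
  · obtain rfl : k = 0 := by nlinarith [sq_nonneg μ]
    simp only [zero_mul, add_zero]
    positivity
  · have key : (μ ^ 2 + k) * ((H * x - μ * u) ^ 2 + k * u ^ 2 - k * x ^ 2)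
        = ((μ ^ 2 + k) * u - μ * H * x) ^ 2 + k * x ^ 2 * (H ^ 2 - (μ ^ 2 + k)) := by ring
    have hprod : 0 ≤ (μ ^ 2 + k) * ((H * x - μ * u) ^ 2 + k * u ^ 2 - k * x ^ 2) := by
      rw [key]
      have := sub_nonneg.2 hμ
      positivity
    linarith [(mul_nonneg_iff_of_pos_left hs).mp hprod]

theorem mul_sq_le_sum_sq_sub_add {H k u : ℝ} {d x : ι → ℝ} {a : ι} (hk : 0 ≤ k)
    (hrest : 2 * k ≤ ∑ b ∈ univ.erase a, d b ^ 2) (ha : d a ^ 2 + k ≤ H ^ 2) :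
    k * x a ^ 2 ≤ ∑ b, (H * x b - d b * u) ^ 2 + H ^ 2 * ∑ b ∈ univ.erase a, x b ^ 2 := by
  have hpair : ∀ b, (d b * u) ^ 2 / 2 ≤ (H * x b - d b * u) ^ 2 + H ^ 2 * x b ^ 2 := fun b => by
    nlinarith [sq_nonneg (2 * H * x b - d b * u)]
  have hrest' : k * u ^ 2 ≤ ∑ b ∈ univ.erase a, (d b * u) ^ 2 / 2 := by
    simp only [mul_pow, ← sum_div, ← sum_mul]
    nlinarith [sq_nonneg u]
  calc k * x a ^ 2 ≤ (H * x a - d a * u) ^ 2 + k * u ^ 2 := mul_sq_le_sq_sub_add_mul_sq hk ha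
    _ ≤ (H * x a - d a * u) ^ 2 +
          ∑ b ∈ univ.erase a, ((H * x b - d b * u) ^ 2 + H ^ 2 * x b ^ 2) := by
      grw [hrest', sum_le_sum fun b _ => hpair b]
    _ = _ := by
      rw [sum_add_distrib, ← mul_sum, ← add_assoc,
        add_sum_erase univ (fun b => (H * x b - d b * u) ^ 2) (mem_univ a)]

theorem sum_erase_add_le_sum_sum_erase {f : ι → ι → ℝ} (hf : ∀ j l, 0 ≤ f j l) (i : ι) :
    ∑ a ∈ univ.erase i, (f i a + f a i) ≤ ∑ j, ∑ l ∈ univ.erase j, f j l := by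
  rw [sum_add_distrib, ← add_sum_erase univ _ (mem_univ i)]
  gcongr with j hj
  exact single_le_sum (fun l _ => hf j l) (mem_erase.2 ⟨(ne_of_mem_erase hj).symm, mem_univ i⟩)

theorem two_mul_sum_sum_erase_sq_le {T : ι → ι → ι → ℝ}
    (hT1 : ∀ i j l, T i j l = T j i l) (hT2 : ∀ i j l, T i j l = T i l j) :
    2 * ∑ a, ∑ b ∈ univ.erase a, T a b b ^ 2 ≤ ∑ a, ∑ b, ∑ c ∈ univ.erase b, T a b c ^ 2 := by
  calc 2 * ∑ a, ∑ b ∈ univ.erase a, T a b b ^ 2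
      = ∑ a, ∑ b ∈ univ.erase a, (T b b a ^ 2 + T b a b ^ 2) := by
        rw [mul_sum]
        refine sum_congr rfl fun a _ => ?_
        rw [mul_sum]
        exact sum_congr rfl fun b _ => by rw [hT2 b b a, hT1 b a b]; ring
    _ = ∑ b, ∑ a ∈ univ.erase b, (T b b a ^ 2 + T b a b ^ 2) :=
        sum_comm' fun a b => by simp [ne_comm]
    _ ≤ _ := sum_le_sum fun b _ =>
        sum_erase_add_le_sum_sum_erase (fun j l => sq_nonneg (T b j l)) b

theorem sum_sum_sum_eq_add_sum_erase (g : ι → ι → ι → ℝ) :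
    ∑ a, ∑ b, ∑ c, g a b c = ∑ a, ∑ b, g a b b + ∑ a, ∑ b, ∑ c ∈ univ.erase b, g a b c := by
  rw [← sum_add_distrib]
  refine sum_congr rfl fun a _ => ?_
  rw [← sum_add_distrib]
  exact sum_congr rfl fun b _ => (add_sum_erase _ _ (mem_univ b)).symm

theorem sum_sq_gradientDefect_diagonal (H : ℝ) (d : ι → ℝ) (T : ι → ι → ι → ℝ) :
    ∑ a, ∑ b, ∑ c, gradientDefect H (diagonal d) T a b c ^ 2 =
      ∑ a, ∑ b, (H * T a b b - d b * ∑ p, T a p p) ^ 2 +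
        H ^ 2 * ∑ a, ∑ b, ∑ c ∈ univ.erase b, T a b c ^ 2 := by
  rw [sum_sum_sum_eq_add_sum_erase]
  simp only [gradientDefect, diagonal_apply_eq]
  congr 1
  simp only [mul_sum]
  refine sum_congr rfl fun a _ => sum_congr rfl fun b _ => sum_congr rfl fun c hc => ?_
  rw [diagonal_apply_ne _ (ne_of_mem_erase hc).symm]
  simp only [zero_mul, sum_const_zero, sub_zero]
  ring

theorem mul_sum_sq_le_sum_sq_gradientDefect_diagonal {ε H : ℝ} {d : ι → ℝ} (hε : 0 < ε)
    (hH : 0 < H) (hd : ∀ b, ε * H ≤ d b) (hsum : ∑ b, d b = H) {T : ι → ι → ι → ℝ}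
    (hT1 : ∀ i j l, T i j l = T j i l) (hT2 : ∀ i j l, T i j l = T i l j) :
    ((Fintype.card ι : ℝ) - 1) / 2 * ε ^ 2 * H ^ 2 * ∑ a, ∑ b, ∑ c, T a b c ^ 2 ≤
      ∑ a, ∑ b, ∑ c, gradientDefect H (diagonal d) T a b c ^ 2 := by
  set κ := ((Fintype.card ι : ℝ) - 1) / 2 * ε ^ 2
  have hκ : κ ≤ 1 / 3 := by
    have hcard := card_mul_le_one_of_pinched hH hd hsum
    simp only [κ]
    nlinarith [mul_le_mul_of_nonneg_right hcard hε.le, sq_nonneg (ε - 1 / 2)]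
  have hslices : ∑ a, κ * H ^ 2 * T a a a ^ 2 ≤
      ∑ a, (∑ b, (H * T a b b - d b * ∑ p, T a p p) ^ 2 +
        H ^ 2 * ∑ b ∈ univ.erase a, T a b b ^ 2) := by
    refine sum_le_sum fun a _ => mul_sq_le_sum_sq_sub_add (x := fun b => T a b b) ?_
      (two_mul_le_sum_erase_sq_of_pinched hε hH hd a) (sq_add_le_of_pinched hε hH hd hsum a)
    have hm : (1 : ℝ) ≤ Fintype.card ι := by exact_mod_cast Fintype.card_pos_iff.2 ⟨a⟩
    have hκ₀ : 0 ≤ κ := mul_nonneg (by linarith) (sq_nonneg ε)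
    exact mul_nonneg hκ₀ (sq_nonneg H)
  have hdiag : ∀ a, ∑ b, T a b b ^ 2 = T a a a ^ 2 + ∑ b ∈ univ.erase a, T a b b ^ 2 :=
    fun a => (add_sum_erase univ (fun b => T a b b ^ 2) (mem_univ a)).symm
  have hmix := two_mul_sum_sum_erase_sq_le hT1 hT2
  rw [sum_sq_gradientDefect_diagonal, sum_sum_sum_eq_add_sum_erase (fun a b c => T a b c ^ 2)]
  simp only [hdiag, sum_add_distrib, ← mul_sum] at hslices ⊢
  set mix := ∑ a, ∑ b ∈ univ.erase a, T a b b ^ 2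
  set off := ∑ a, ∑ b, ∑ c ∈ univ.erase b, T a b c ^ 2
  have hrest : 0 ≤ H ^ 2 * (mix + off) := by positivity
  nlinarith [mul_le_mul_of_nonneg_left hmix (sq_nonneg H), mul_le_mul_of_nonneg_right hκ hrest]

end PinchingEstimate

theorem stmt5_general (n : ℕ) (ε : ℝ) (hε : 0 < ε)
    (A : Matrix (Fin n) (Fin n) ℝ) (hA : A.IsSymm) (htr : 0 < A.trace)
    (hpin : (A - (ε * A.trace) • (1 : Matrix (Fin n) (Fin n) ℝ)).PosSemidef)
    (T : Fin n → Fin n → Fin n → ℝ)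
    (hT1 : ∀ i j l, T i j l = T j i l) (hT2 : ∀ i j l, T i j l = T i l j) :
    ε ≤ 1 / n ∧
      ((n : ℝ) - 1) / 2 * ε ^ 2 * A.trace ^ 2 * (∑ i, ∑ j, ∑ l, (T i j l) ^ 2) ≤
        ∑ i, ∑ j, ∑ l, (A.trace * T i j l - A j l * (∑ p, T i p p)) ^ 2 := by
  obtain ⟨O, d, hOOt, hOtO, hd⟩ := hA.exists_orthogonal_diagonalization
  have hpinched : ∀ b, ε * A.trace ≤ d b := le_diagonal_of_posSemidef_sub_smul hpin hOtO hd
  have hsum : ∑ b, d b = A.trace := sum_eq_trace_of_conj_eq_diagonal hOOt hd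
  refine ⟨?_, ?_⟩
  · have hcard := card_mul_le_one_of_pinched htr hpinched hsum
    have hn : 0 < n := Nat.pos_of_ne_zero (by rintro rfl; simp at htr)
    rw [Fintype.card_fin] at hcard
    rw [le_div_iff₀ (by positivity)]
    linarith
  · calc _ = ((n : ℝ) - 1) / 2 * ε ^ 2 * A.trace ^ 2 *
          ∑ a, ∑ b, ∑ c, rotate O T a b c ^ 2 := by rw [sum_sq_rotate hOOt]
      _ ≤ ∑ a, ∑ b, ∑ c, gradientDefect A.trace (diagonal d) (rotate O T) a b c ^ 2 := by
        simpa only [Fintype.card_fin] using mul_sum_sq_le_sum_sq_gradientDefect_diagonal hε htr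
          hpinched hsum (rotate_swap₁₂ hT1) (rotate_swap₂₃ hT2)
      _ = ∑ a, ∑ b, ∑ c, gradientDefect A.trace A T a b c ^ 2 := by
        rw [← hd, ← rotate_gradientDefect hOOt, sum_sq_rotate hOOt]

/-- Pointwise algebraic content of the gradient estimate
`|H∇α − α∇H|² ≥ ((n−1)/2)ε²H²|∇A|²`:  let `A` be a real symmetric `n×n` matrix with
`tr A > 0` and `A − ε·(tr A)·I` positive semidefinite, and let `T` be a totally
symmetric 3-tensor.  With `H = tr A` and `U_i = Σ_p T_{ipp}`, one has `ε ≤ 1/n` and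
`Σ_{i,j,l} (H·T_{ijl} − A_{jl}·U_i)² ≥ ((n−1)/2)·ε²·H²·Σ_{i,j,l} T_{ijl}²`. -/
theorem stmt5 (n : ℕ) (hn : 2 ≤ n) (ε : ℝ) (hε : 0 < ε)
    (A : Matrix (Fin n) (Fin n) ℝ) (hA : A.IsSymm) (htr : 0 < A.trace)
    (hpin : (A - (ε * A.trace) • (1 : Matrix (Fin n) (Fin n) ℝ)).PosSemidef)
    (T : Fin n → Fin n → Fin n → ℝ)
    (hT1 : ∀ i j l, T i j l = T j i l) (hT2 : ∀ i j l, T i j l = T i l j) :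
    ε ≤ 1 / n ∧
      ((n : ℝ) - 1) / 2 * ε ^ 2 * A.trace ^ 2 * (∑ i, ∑ j, ∑ l, (T i j l) ^ 2) ≤
        ∑ i, ∑ j, ∑ l, (A.trace * T i j l - A j l * (∑ p, T i p p)) ^ 2 :=
  stmt5_general n ε hε A hA htr hpin T hT1 hT2
end

section
/- Let n ≥ 2, m ∈ {1,…,n} and β > 1/m, and set σ(k) = H_m(k)^β on the open positive cone Γ₊ ⊂ ℝ^n. For every ε ∈ (0, 1/n] there exists a constant M₁ = M₁(n,m,β,ε) > 0 such that for every k ∈ ℝ^n satisfying min_i k_i ≥ ε·H(k) > 0 and every index i ∈ {1,…,n}, one has ∂σ/∂k_i(k) ≥ M₁·|k|^{mβ−1}, where |k| is the Euclidean norm. -/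
/-!
On the cone `min_i k_i ≥ ε H(k)` every coordinate lies between `ε H` and `H`, so by monotonicity
and the normalization `H_m(a, …, a) = a^m` we get `(ε H)^m ≤ H_m(k) ≤ H^m`, while `∂H_m/∂k_i` is
at least one of its monomials, hence `≳ (ε H)^{m-1}`. The chain rule
`∂σ/∂k_i = β H_m^{β-1} ∂H_m/∂k_i` then gives `∂σ/∂k_i ≳ H^{mβ-1}`, and `|k| ≤ H` together with
`mβ - 1 > 0` turns this into a bound in terms of `|k|`.
-/

open Finset

noncomputable def hmCoeff (n m : ℕ) : ℝ :=
  ((Nat.factorial m * Nat.factorial (n - m) : ℕ) : ℝ) / (Nat.factorial n : ℝ)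

noncomputable def partialHm (n m : ℕ) (i : Fin n) (k : Fin n → ℝ) : ℝ :=
  hmCoeff n m * ∑ s ∈ powersetCard m univ, if i ∈ s then ∏ l ∈ s.erase i, k l else 0

lemma Hm_eq (n m : ℕ) (k : Fin n → ℝ) :
    Hm n m k = hmCoeff n m * ∑ s ∈ powersetCard m univ, ∏ i ∈ s, k i := rfl

lemma hmCoeff_pos (n m : ℕ) : 0 < hmCoeff n m := by
  unfold hmCoeff; positivity

lemma hmCoeff_mul_choose {n m : ℕ} (hmn : m ≤ n) : hmCoeff n m * (n.choose m : ℝ) = 1 := by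
  have hfact : n.choose m * (m.factorial * (n - m).factorial) = n.factorial := by
    rw [← Nat.choose_mul_factorial_mul_factorial hmn]; ring
  have hn0 : (n.factorial : ℝ) ≠ 0 := Nat.cast_ne_zero.2 (Nat.factorial_ne_zero n)
  rw [hmCoeff, div_mul_eq_mul_div, div_eq_one_iff_eq hn0, ← hfact]
  push_cast; ring

lemma Hm_const {n m : ℕ} (hmn : m ≤ n) (a : ℝ) : Hm n m (fun _ => a) = a ^ m := by
  have hsum : ∑ s ∈ powersetCard m (univ : Finset (Fin n)), ∏ _i ∈ s, a = n.choose m * a ^ m := by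
    rw [sum_congr rfl fun s hs => by rw [prod_const, (mem_powersetCard.1 hs).2], sum_const,
      card_powersetCard, card_univ, Fintype.card_fin, nsmul_eq_mul]
  rw [Hm_eq, hsum, ← mul_assoc, hmCoeff_mul_choose hmn, one_mul]

lemma Hm_mono {n m : ℕ} {k k' : Fin n → ℝ} (h0 : ∀ j, 0 ≤ k j) (h : ∀ j, k j ≤ k' j) :
    Hm n m k ≤ Hm n m k' := by
  rw [Hm_eq, Hm_eq]
  exact mul_le_mul_of_nonneg_left
    (sum_le_sum fun s _ => prod_le_prod (fun j _ => h0 j) fun j _ => h j) (hmCoeff_pos n m).le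

lemma pow_le_Hm {n m : ℕ} (hmn : m ≤ n) {a : ℝ} {k : Fin n → ℝ} (ha : 0 ≤ a)
    (h : ∀ j, a ≤ k j) : a ^ m ≤ Hm n m k :=
  Hm_const hmn a ▸ Hm_mono (fun _ => ha) h

lemma Hm_le_pow {n m : ℕ} (hmn : m ≤ n) {b : ℝ} {k : Fin n → ℝ} (h0 : ∀ j, 0 ≤ k j)
    (h : ∀ j, k j ≤ b) : Hm n m k ≤ b ^ m :=
  Hm_const hmn b ▸ Hm_mono h0 h

lemma hasFDerivAt_Hm (n m : ℕ) (k : Fin n → ℝ) :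
    HasFDerivAt (Hm n m)
      (hmCoeff n m • ∑ s ∈ powersetCard m univ,
        ∑ j ∈ s, (∏ l ∈ s.erase j, k l) • (ContinuousLinearMap.proj j : (Fin n → ℝ) →L[ℝ] ℝ))
      k :=
  (HasFDerivAt.fun_sum fun _ _ => HasFDerivAt.finsetProd fun j _ =>
    (ContinuousLinearMap.proj j : (Fin n → ℝ) →L[ℝ] ℝ).hasFDerivAt).const_mul _

lemma fderiv_Hm_rpow_apply_single {n m : ℕ} (β : ℝ) {k : Fin n → ℝ} (hpos : 0 < Hm n m k)
    (i : Fin n) :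
    fderiv ℝ (fun k => Hm n m k ^ β) k (Pi.single i 1) =
      β * Hm n m k ^ (β - 1) * partialHm n m i k := by
  have h : HasFDerivAt (fun k => Hm n m k ^ β) _ k :=
    (Real.hasDerivAt_rpow_const (Or.inl hpos.ne')).comp_hasFDerivAt k (hasFDerivAt_Hm n m k)
  rw [h.fderiv, partialHm]
  simp only [smul_apply, FunLike.coe_sum, Finset.sum_apply,
    ContinuousLinearMap.proj_apply, Pi.single_apply, smul_eq_mul, mul_ite, mul_one, mul_zero,
    sum_ite_eq', mul_sum]

lemma hmCoeff_mul_pow_le_partialHm {n m : ℕ} (hm1 : 1 ≤ m) (hmn : m ≤ n) {a : ℝ}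
    {k : Fin n → ℝ} (ha : 0 ≤ a) (h : ∀ j, a ≤ k j) (i : Fin n) :
    hmCoeff n m * a ^ (m - 1) ≤ partialHm n m i k := by
  have hk0 : ∀ j, 0 ≤ k j := fun j => ha.trans (h j)
  have hcard : m - 1 ≤ (univ.erase i).card := by
    rw [card_erase_of_mem (mem_univ i), card_univ, Fintype.card_fin]; omega
  obtain ⟨t, hti, htc⟩ := exists_subset_card_eq hcard
  have hit : i ∉ t := fun hi => (mem_erase.1 (hti hi)).1 rfl
  have hmem : insert i t ∈ powersetCard m univ := by
    rw [mem_powersetCard, card_insert_of_notMem hit, htc]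
    exact ⟨subset_univ _, by omega⟩
  -- a single monomial `∏_{l ∈ t} k_l` of `∂H_m/∂k_i` already dominates `a^(m-1)`
  have hterm : a ^ (m - 1) ≤ ∏ l ∈ t, k l := by
    rw [← htc, ← prod_const]
    exact prod_le_prod (fun _ _ => ha) fun l _ => h l
  rw [partialHm]
  refine mul_le_mul_of_nonneg_left (hterm.trans ?_) (hmCoeff_pos n m).le
  have hle := single_le_sum (f := fun s => if i ∈ s then ∏ l ∈ s.erase i, k l else 0)
    (fun s _ => by split_ifs; exacts [prod_nonneg fun l _ => hk0 l, le_rfl]) hmem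
  simpa only [mem_insert_self, if_true, erase_insert hit] using hle

lemma sqrt_sum_sq_le_sum {ι : Type*} (s : Finset ι) {f : ι → ℝ} (hf : ∀ i ∈ s, 0 ≤ f i) :
    Real.sqrt (∑ i ∈ s, f i ^ 2) ≤ ∑ i ∈ s, f i :=
  Real.sqrt_le_iff.2 ⟨sum_nonneg hf, sum_sq_le_sq_sum_of_nonneg hf⟩

lemma rpow_abs_mul_rpow_le_rpow {a P x : ℝ} (t : ℝ) (ha0 : 0 < a) (ha1 : a ≤ 1) (hP : 0 < P)
    (h1 : a * P ≤ x) (h2 : x ≤ P) : a ^ |t| * P ^ t ≤ x ^ t := by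
  have hx : 0 < x := lt_of_lt_of_le (by positivity) h1
  rcases le_total 0 t with ht | ht
  · rw [abs_of_nonneg ht, ← Real.mul_rpow ha0.le hP.le]
    exact Real.rpow_le_rpow (by positivity) h1 ht
  · rw [abs_of_nonpos ht]
    calc a ^ (-t) * P ^ t ≤ 1 * P ^ t := by
          gcongr; exact Real.rpow_le_one ha0.le ha1 (neg_nonneg.2 ht)
      _ ≤ x ^ t := by rw [one_mul]; exact Real.rpow_le_rpow_of_nonpos hx h2 ht

lemma fderiv_Hm_rpow_lower_bound {n m : ℕ} (hm1 : 1 ≤ m) (hmn : m ≤ n) {β ε : ℝ} (hβ : 0 < β)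
    (hε : 0 < ε) {k : Fin n → ℝ} (hH : 0 < ∑ j, k j) (hk : ∀ j, ε * (∑ j, k j) ≤ k j)
    (i : Fin n) :
    β * (ε ^ m) ^ |β - 1| * (hmCoeff n m * ε ^ (m - 1)) * (∑ j, k j) ^ ((m : ℝ) * β - 1) ≤
      fderiv ℝ (fun k => Hm n m k ^ β) k (Pi.single i 1) := by
  set H := ∑ j, k j
  have hεH : 0 ≤ ε * H := by positivity
  have hk0 : ∀ j, 0 ≤ k j := fun j => hεH.trans (hk j)
  have hkH : ∀ j, k j ≤ H := fun j => single_le_sum (fun l _ => hk0 l) (mem_univ j)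
  have hε1 : ε ≤ 1 := le_of_mul_le_mul_right (by simpa using (hk i).trans (hkH i)) hH
  have hlow : ε ^ m * H ^ m ≤ Hm n m k := mul_pow ε H m ▸ pow_le_Hm hmn hεH hk
  have hpos : 0 < Hm n m k := lt_of_lt_of_le (by positivity) hlow
  have hHm : (ε ^ m) ^ |β - 1| * (H ^ m) ^ (β - 1) ≤ Hm n m k ^ (β - 1) :=
    rpow_abs_mul_rpow_le_rpow _ (by positivity) (pow_le_one₀ hε.le hε1) (by positivity) hlow
      (Hm_le_pow hmn hk0 hkH)
  have hsplit : H ^ ((m : ℝ) * β - 1) = (H ^ m) ^ (β - 1) * H ^ (m - 1) := by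
    rw [← Real.rpow_natCast, ← Real.rpow_natCast, ← Real.rpow_mul hH.le, ← Real.rpow_add hH,
      Nat.cast_sub hm1]
    push_cast; congr 1; ring
  rw [fderiv_Hm_rpow_apply_single β hpos i, hsplit]
  calc _ = β * ((ε ^ m) ^ |β - 1| * (H ^ m) ^ (β - 1)) * (hmCoeff n m * (ε * H) ^ (m - 1)) := by
        ring
    _ ≤ _ := by
        have hpartial := hmCoeff_mul_pow_le_partialHm hm1 hmn hεH hk i
        have hc := (hmCoeff_pos n m).le
        gcongr

theorem stmt8_general (n m : ℕ) (β : ℝ) (hm1 : 1 ≤ m) (hmn : m ≤ n)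
    (hβ : 1 / (m : ℝ) < β) (ε : ℝ) (hε1 : 0 < ε) :
    ∃ M₁ > (0 : ℝ), ∀ k : Fin n → ℝ, 0 < ∑ j, k j →
      (∀ i, ε * (∑ j, k j) ≤ k i) → ∀ i,
      M₁ * Real.sqrt (∑ j, (k j) ^ 2) ^ ((m : ℝ) * β - 1) ≤
        fderiv ℝ (fun k => Hm n m k ^ β) k (Pi.single i 1) := by
  have hm0 : (0 : ℝ) < m := by exact_mod_cast hm1
  have hexp : 0 < (m : ℝ) * β - 1 := by
    have := (div_lt_iff₀ hm0).1 hβ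
    linarith
  have hβ0 : 0 < β := lt_trans (by positivity) hβ
  have hc := hmCoeff_pos n m
  refine ⟨β * (ε ^ m) ^ |β - 1| * (hmCoeff n m * ε ^ (m - 1)), by positivity, ?_⟩
  intro k hH hk i
  have hk0 : ∀ j ∈ univ, 0 ≤ k j := fun j _ => (mul_pos hε1 hH).le.trans (hk j)
  refine le_trans ?_ (fderiv_Hm_rpow_lower_bound hm1 hmn hβ0 hε1 hH hk i)
  gcongr
  exact sqrt_sum_sq_le_sum univ hk0

/-- Let `σ = H_m^β` with `β > 1/m`.  For every `ε ∈ (0, 1/n]` there exists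
`M₁ = M₁(n,m,β,ε) > 0` such that for every `k` with `min_i k_i ≥ ε·H(k) > 0` and
every index `i`, `∂σ/∂k_i(k) ≥ M₁·|k|^(mβ−1)` with `|k|` the Euclidean norm. -/
theorem stmt8 (n m : ℕ) (β : ℝ) (hn : 2 ≤ n) (hm1 : 1 ≤ m) (hmn : m ≤ n)
    (hβ : 1 / (m : ℝ) < β) (ε : ℝ) (hε1 : 0 < ε) (hε2 : ε ≤ 1 / n) :
    ∃ M₁ > (0 : ℝ), ∀ k : Fin n → ℝ, 0 < ∑ j, k j →
      (∀ i, ε * (∑ j, k j) ≤ k i) → ∀ i,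
      M₁ * Real.sqrt (∑ j, (k j) ^ 2) ^ ((m : ℝ) * β - 1) ≤
        fderiv ℝ (fun k => Hm n m k ^ β) k (Pi.single i 1) :=
  stmt8_general n m β hm1 hmn hβ ε hε1
end

section
/- Let n ≥ 2, m ∈ {1,…,n} and β > 1/m. Define, for an n×n real matrix A, σ̂(A) = Ĥ_m(A)^β, where Ĥ_m(A) = (m!(n−m)!/n!)·(−1)^m times the coefficient of X^{n−m} in the characteristic polynomial det(X·I − A) (so Ĥ_m(A) is the normalized m-th elementary symmetric polynomial of the eigenvalues of A). For every ε ∈ (0, 1/n] there exists a constant M₂ = M₂(n,m,β,ε) > 0 such that: for every real symmetric n×n matrix A with tr A > 0 and A − ε·(tr A)·I positive semidefinite, σ̂ is twice Fréchet differentiable at A and its second derivative satisfies |D²σ̂(A)[B,B]| ≤ M₂·‖A‖^{mβ−2}·‖B‖² for every n×n real matrix B, where ‖·‖ denotes the Frobenius norm. -/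
attribute [local instance] Matrix.frobeniusNormedAddCommGroup Matrix.frobeniusNormedSpace

/-- `Ĥ_m(A)`: the normalized `m`-th elementary symmetric polynomial of the eigenvalues
of `A`, defined through the characteristic polynomial: it is `(m!(n−m)!/n!)·(−1)^m`
times the coefficient of `X^(n−m)` in `det(X·I − A)`. -/
noncomputable def HmMat (n m : ℕ) (A : Matrix (Fin n) (Fin n) ℝ) : ℝ :=
  ((Nat.factorial m * Nat.factorial (n - m) : ℕ) : ℝ) / (Nat.factorial n : ℝ) *
    ((-1 : ℝ) ^ m * (Matrix.charpoly A).coeff (n - m))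

/-!
`Ĥ_m` is a polynomial in the entries, homogeneous of degree `m`, so `σ̂ = Ĥ_m^β` is smooth
where `Ĥ_m > 0` and positively homogeneous of degree `mβ` there; hence `D²σ̂` is homogeneous
of degree `mβ - 2`. On the pinched cone every nonzero matrix is positive definite, so `Ĥ_m > 0`
on its intersection with the unit sphere, a compact set on which the continuous `D²σ̂` is
bounded. Scaling `A` to `A / ‖A‖` gives the estimate.
-/

open Topology Polynomial

theorem iteratedFDeriv_smul_apply_of_eventuallyEq {𝕜 E F : Type*} [NontriviallyNormedField 𝕜]
    [NormedAddCommGroup E] [NormedSpace 𝕜 E] [NormedAddCommGroup F] [NormedSpace 𝕜 F]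
    {f : E → F} {x : E} {r c : 𝕜} (hr : r ≠ 0) (hc : c ≠ 0)
    (hf : (fun y => f (r • y)) =ᶠ[𝓝 x] fun y => c • f y) (k : ℕ) (v : E) :
    r ^ k • iteratedFDeriv 𝕜 k f (r • x) (fun _ => v) =
      c • iteratedFDeriv 𝕜 k f x (fun _ => v) := by
  -- both rescalings are linear equivalences, so no differentiability of `f` is needed
  let R : E ≃L[𝕜] E := .smulLeft (Units.mk0 r hr)
  let C : F ≃L[𝕜] F := .smulLeft (Units.mk0 c hc)
  have hR : iteratedFDeriv 𝕜 k (f ∘ R) x =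
      (iteratedFDeriv 𝕜 k f (R x)).compContinuousLinearMap fun _ => (R : E →L[𝕜] E) := by
    simpa [iteratedFDerivWithin_univ] using
      R.iteratedFDerivWithin_comp_right f uniqueDiffOn_univ (Set.mem_univ (R x)) k
  have hC := C.iteratedFDeriv_comp_left (f := f) (x := x) (i := k)
  have h := congrArg (· fun _ => v) (hf.iteratedFDeriv 𝕜 k).eq_of_nhds
  change iteratedFDeriv 𝕜 k (f ∘ R) x _ = iteratedFDeriv 𝕜 k (C ∘ f) x _ at h
  rw [hR, hC] at h
  simpa [R, C, Units.smul_def, ContinuousMultilinearMap.map_smul_univ] using h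

theorem iteratedFDeriv_smul_apply_of_eventuallyEq_rpow {E F : Type*} [NormedAddCommGroup E]
    [NormedSpace ℝ E] [NormedAddCommGroup F] [NormedSpace ℝ F] {f : E → F} {x : E} {r p : ℝ}
    (hr : 0 < r) (hf : (fun y => f (r • y)) =ᶠ[𝓝 x] fun y => r ^ p • f y) (k : ℕ) (v : E) :
    iteratedFDeriv ℝ k f (r • x) (fun _ => v) =
      r ^ (p - k) • iteratedFDeriv ℝ k f x (fun _ => v) := by
  have h := iteratedFDeriv_smul_apply_of_eventuallyEq hr.ne' (Real.rpow_pos_of_pos hr p).ne' hf k v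
  rw [Real.rpow_sub hr, Real.rpow_natCast, div_eq_inv_mul, mul_smul, ← h, smul_smul,
    inv_mul_cancel₀ (pow_pos hr k).ne', one_smul]

theorem MvPolynomial.IsHomogeneous.eval_smul {σ R : Type*} [CommSemiring R]
    {φ : MvPolynomial σ R} {d : ℕ} (hφ : φ.IsHomogeneous d) (r : R) (x : σ → R) :
    MvPolynomial.eval (r • x) φ = r ^ d * MvPolynomial.eval x φ := by
  simp only [MvPolynomial.eval_eq, Finset.mul_sum]
  refine Finset.sum_congr rfl fun e he => ?_
  have hdeg : ∑ i ∈ e.support, e i = d := by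
    rw [← hφ (MvPolynomial.mem_support_iff.mp he), Pi.one_def, ← Finsupp.degree_eq_weight_one,
      Finsupp.degree_apply]
  simp only [Pi.smul_apply, smul_eq_mul, mul_pow, Finset.prod_mul_distrib,
    Finset.prod_pow_eq_pow_sum, hdeg]
  ring

namespace Matrix

theorem coeff_charpoly_eq_eval_univ {ι R : Type*} [Fintype ι] [DecidableEq ι] [CommRing R]
    (A : Matrix ι ι R) (i : ℕ) :
    A.charpoly.coeff i =
      MvPolynomial.eval (fun p : ι × ι => A p.1 p.2) ((charpoly.univ R ι).coeff i) :=
  (charpoly.univ_coeff_eval₂Hom ι (RingHom.id R) (fun p => A p.1 p.2) i).symm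

theorem coeff_charpoly_smul {ι R : Type*} [Fintype ι] [DecidableEq ι] [CommRing R]
    {i j : ℕ} (h : i + j = Fintype.card ι) (r : R) (A : Matrix ι ι R) :
    (r • A).charpoly.coeff i = r ^ j * A.charpoly.coeff i := by
  rw [coeff_charpoly_eq_eval_univ (r • A), coeff_charpoly_eq_eval_univ A]
  exact (charpoly.univ_coeff_isHomogeneous R ι i j h).eval_smul r _

open scoped ComplexOrder in
theorem isClosed_setOf_posSemidef {ι 𝕜 : Type*} [Fintype ι] [RCLike 𝕜] :
    IsClosed {A : Matrix ι ι 𝕜 | A.PosSemidef} := by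
  simp only [posSemidef_iff_dotProduct_mulVec, Set.ofPred_and, Set.ofPred_forall]
  refine .inter (isClosed_eq (by fun_prop) continuous_id) (isClosed_iInter fun x => ?_)
  exact isClosed_le continuous_const (by fun_prop)

end Matrix

-- The paper's pinching cone `{A | tr A > 0, A ≥ ε (tr A) I}` with `0` added, which makes it closed.
def pinchedCone (ι : Type*) [Fintype ι] [DecidableEq ι] (ε : ℝ) : Set (Matrix ι ι ℝ) :=
  {A | 0 ≤ A.trace ∧ (A - (ε * A.trace) • (1 : Matrix ι ι ℝ)).PosSemidef}

section PinchedCone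

variable {ι : Type*} [Fintype ι] [DecidableEq ι] {ε : ℝ} {A : Matrix ι ι ℝ}

theorem mem_pinchedCone :
    A ∈ pinchedCone ι ε ↔ 0 ≤ A.trace ∧ (A - (ε * A.trace) • (1 : Matrix ι ι ℝ)).PosSemidef :=
  Iff.rfl

theorem isClosed_pinchedCone : IsClosed (pinchedCone ι ε) :=
  .inter (isClosed_le continuous_const continuous_id.matrix_trace)
    (Matrix.isClosed_setOf_posSemidef.preimage (by fun_prop))

theorem smul_mem_pinchedCone (hA : A ∈ pinchedCone ι ε) {r : ℝ} (hr : 0 ≤ r) :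
    r • A ∈ pinchedCone ι ε := by
  obtain ⟨htr, hpsd⟩ := mem_pinchedCone.mp hA
  refine ⟨by simpa [Matrix.trace_smul] using mul_nonneg hr htr, ?_⟩
  convert hpsd.smul hr using 1
  rw [Matrix.trace_smul, smul_sub, smul_smul, smul_eq_mul]
  ring_nf

theorem posDef_of_mem_pinchedCone (hε : 0 < ε) (hA : A ∈ pinchedCone ι ε) (hA0 : A ≠ 0) :
    A.PosDef := by
  obtain ⟨htr_nonneg, hpsd⟩ := mem_pinchedCone.mp hA
  have htr : 0 < A.trace := by
    refine htr_nonneg.lt_of_ne fun h => hA0 ?_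
    rw [← h, mul_zero, zero_smul, sub_zero] at hpsd
    exact hpsd.trace_eq_zero_iff.mp h.symm
  simpa using Matrix.PosDef.posSemidef_add hpsd (Matrix.PosDef.one.smul (mul_pos hε htr))

theorem isCompact_pinchedCone_inter_sphere : IsCompact (pinchedCone ι ε ∩ Metric.sphere 0 1) :=
  (isCompact_sphere 0 1).of_isClosed_subset (isClosed_pinchedCone.inter Metric.isClosed_sphere)
    Set.inter_subset_right

end PinchedCone

section HmMat

variable {n m : ℕ}

theorem hmMat_smul (hmn : m ≤ n) (r : ℝ) (A : Matrix (Fin n) (Fin n) ℝ) :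
    HmMat n m (r • A) = r ^ m * HmMat n m A := by
  rw [HmMat, HmMat, Matrix.coeff_charpoly_smul (j := m) (by simp; omega)]
  ring

theorem contDiff_hmMat {k : WithTop ℕ∞} : ContDiff ℝ k (HmMat n m) := by
  have hP := AnalyticOnNhd.eval_linearMap'
    (fun p : Fin n × Fin n => Matrix.entryLinearMap ℝ ℝ p.1 p.2)
    ((Matrix.charpoly.univ ℝ (Fin n)).coeff (n - m))
  have hcoeff : (fun A : Matrix (Fin n) (Fin n) ℝ => A.charpoly.coeff (n - m)) =
      fun A => MvPolynomial.eval (fun p : Fin n × Fin n => A p.1 p.2)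
        ((Matrix.charpoly.univ ℝ (Fin n)).coeff (n - m)) :=
    funext fun A => A.coeff_charpoly_eq_eval_univ (n - m)
  exact contDiff_const.mul (contDiff_const.mul (hcoeff ▸ hP.contDiff))

theorem hmMat_eq_esymm_eigenvalues (hmn : m ≤ n) {A : Matrix (Fin n) (Fin n) ℝ}
    (hA : A.IsHermitian) :
    HmMat n m A = ((m.factorial * (n - m).factorial : ℕ) : ℝ) / n.factorial *
      (Finset.univ.val.map hA.eigenvalues).esymm m := by
  have hcoeff : A.charpoly.coeff (n - m) =
      (-1) ^ m * (Finset.univ.val.map hA.eigenvalues).esymm m := by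
    have hprod : A.charpoly = ((Finset.univ.val.map hA.eigenvalues).map (X - C ·)).prod := by
      simp [hA.charpoly_eq, Finset.prod_eq_multiset_prod, Function.comp_def]
    rw [hprod, Multiset.prod_X_sub_C_coeff _ (by simp)]
    simp [Nat.sub_sub_self hmn]
  rw [HmMat, hcoeff, ← mul_assoc ((-1 : ℝ) ^ m), ← pow_add, Even.neg_one_pow ⟨m, rfl⟩, one_mul]

theorem hmMat_pos_of_posDef (hmn : m ≤ n) {A : Matrix (Fin n) (Fin n) ℝ} (hA : A.PosDef) :
    0 < HmMat n m A := by
  rw [hmMat_eq_esymm_eigenvalues hmn hA.isHermitian, Finset.esymm_map_val]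
  refine mul_pos (by positivity) (Finset.sum_pos (fun t _ => ?_) ?_)
  · exact Finset.prod_pos fun i _ => hA.eigenvalues_pos i
  · exact Finset.powersetCard_nonempty.mpr (by simpa using hmn)

theorem hmMat_pos_of_mem_pinchedCone (hmn : m ≤ n) {ε : ℝ} (hε : 0 < ε)
    {A : Matrix (Fin n) (Fin n) ℝ} (hA : A ∈ pinchedCone (Fin n) ε) (hA0 : A ≠ 0) :
    0 < HmMat n m A :=
  hmMat_pos_of_posDef hmn (posDef_of_mem_pinchedCone hε hA hA0)

theorem iteratedFDeriv_rpow_hmMat_smul_apply (hmn : m ≤ n) (β : ℝ) {r : ℝ} (hr : 0 < r)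
    {A : Matrix (Fin n) (Fin n) ℝ} (hA : 0 < HmMat n m A) (k : ℕ) (B : Matrix (Fin n) (Fin n) ℝ) :
    iteratedFDeriv ℝ k (fun X => HmMat n m X ^ β) (r • A) (fun _ => B) =
      r ^ (m * β - k) * iteratedFDeriv ℝ k (fun X => HmMat n m X ^ β) A (fun _ => B) := by
  refine iteratedFDeriv_smul_apply_of_eventuallyEq_rpow hr ?_ k B
  filter_upwards [continuousAt_const.eventually_lt
    (contDiff_hmMat (k := 0)).continuous.continuousAt hA] with X hX
  rw [hmMat_smul hmn, Real.mul_rpow (by positivity) hX.le, ← Real.rpow_natCast,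
    ← Real.rpow_mul hr.le, smul_eq_mul]

end HmMat

theorem stmt9_general (n m : ℕ) (β : ℝ) (hmn : m ≤ n) (ε : ℝ) (hε1 : 0 < ε) :
    ∃ M₂ > (0 : ℝ), ∀ A : Matrix (Fin n) (Fin n) ℝ, A.IsSymm → 0 < A.trace →
      (A - (ε * A.trace) • (1 : Matrix (Fin n) (Fin n) ℝ)).PosSemidef →
      ContDiffAt ℝ 2 (fun X : Matrix (Fin n) (Fin n) ℝ => HmMat n m X ^ β) A ∧
      ∀ B : Matrix (Fin n) (Fin n) ℝ,
        |iteratedFDeriv ℝ 2 (fun X : Matrix (Fin n) (Fin n) ℝ => HmMat n m X ^ β) A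
            (fun _ => B)| ≤
          M₂ * ‖A‖ ^ ((m : ℝ) * β - 2) * ‖B‖ ^ 2 := by
  set σ := fun X : Matrix (Fin n) (Fin n) ℝ => HmMat n m X ^ β
  have hσ : ∀ X, 0 < HmMat n m X → ContDiffAt ℝ 2 σ X := fun X hX =>
    contDiff_hmMat.contDiffAt.rpow_const_of_ne hX.ne'
  obtain ⟨C, hC⟩ := isCompact_pinchedCone_inter_sphere.exists_bound_of_continuousOn
    (f := iteratedFDeriv ℝ 2 σ) fun X hX =>
      (hσ X (hmMat_pos_of_mem_pinchedCone hmn hε1 hX.1 (ne_zero_of_mem_unit_sphere ⟨X, hX.2⟩))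
        |>.continuousAt_iteratedFDeriv le_rfl).continuousWithinAt
  refine ⟨max C 1, by positivity, fun A _ htr hpsd => ?_⟩
  have hA : A ∈ pinchedCone (Fin n) ε := ⟨htr.le, hpsd⟩
  have hA0 : A ≠ 0 := by rintro rfl; simp at htr
  refine ⟨hσ A (hmMat_pos_of_mem_pinchedCone hmn hε1 hA hA0), fun B => ?_⟩
  set Â := ‖A‖⁻¹ • A
  have hÂ : Â ∈ pinchedCone (Fin n) ε ∩ Metric.sphere 0 1 :=
    ⟨smul_mem_pinchedCone hA (by positivity), mem_sphere_zero_iff_norm.mpr (norm_smul_inv_norm hA0)⟩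
  have hbound : |iteratedFDeriv ℝ 2 σ Â (fun _ => B)| ≤ max C 1 * ‖B‖ ^ 2 := by
    simpa using (iteratedFDeriv ℝ 2 σ Â).le_of_opNorm_le ((hC Â hÂ).trans (le_max_left C 1))
      fun _ => B
  have hscale := iteratedFDeriv_rpow_hmMat_smul_apply hmn β (norm_pos_iff.mpr hA0)
    (hmMat_pos_of_mem_pinchedCone hmn hε1 hÂ.1 (ne_zero_of_mem_unit_sphere ⟨Â, hÂ.2⟩)) 2 B
  rw [smul_inv_smul₀ (norm_ne_zero_iff.mpr hA0)] at hscale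
  rw [hscale, abs_mul, abs_of_pos (by positivity), Nat.cast_ofNat, mul_comm (max C 1), mul_assoc]
  exact mul_le_mul_of_nonneg_left hbound (by positivity)

/-- Let `σ̂(A) = Ĥ_m(A)^β` with `β > 1/m`.  For every `ε ∈ (0, 1/n]` there exists
`M₂ = M₂(n,m,β,ε) > 0` such that for every real symmetric `n×n` matrix `A` with
`tr A > 0` and `A − ε·(tr A)·I` positive semidefinite, `σ̂` is twice (continuously)
Fréchet differentiable at `A` and `|D²σ̂(A)[B,B]| ≤ M₂·‖A‖^(mβ−2)·‖B‖²` for every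
matrix `B`, where `‖·‖` is the Frobenius norm. -/
theorem stmt9 (n m : ℕ) (β : ℝ) (hn : 2 ≤ n) (hm1 : 1 ≤ m) (hmn : m ≤ n)
    (hβ : 1 / (m : ℝ) < β) (ε : ℝ) (hε1 : 0 < ε) (hε2 : ε ≤ 1 / n) :
    ∃ M₂ > (0 : ℝ), ∀ A : Matrix (Fin n) (Fin n) ℝ, A.IsSymm → 0 < A.trace →
      (A - (ε * A.trace) • (1 : Matrix (Fin n) (Fin n) ℝ)).PosSemidef →
      ContDiffAt ℝ 2 (fun X : Matrix (Fin n) (Fin n) ℝ => HmMat n m X ^ β) A ∧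
      ∀ B : Matrix (Fin n) (Fin n) ℝ,
        |iteratedFDeriv ℝ 2 (fun X : Matrix (Fin n) (Fin n) ℝ => HmMat n m X ^ β) A
            (fun _ => B)| ≤
          M₂ * ‖A‖ ^ ((m : ℝ) * β - 2) * ‖B‖ ^ 2 :=
  stmt9_general n m β hmn ε hε1
end

section
/- Let n ≥ 2, m ∈ {1,…,n}, 0 < H₀ ≤ H₁, and ε ∈ (0, 1/n]. Let φ(k) = H_m(k)^{1/m} on the open positive cone Γ₊, let 𝒞 = {k ∈ ℝ^n : H₀ ≤ H(k) ≤ H₁ and k_i ≥ ε·H(k) for all i}, and define φ̃(k) = min_{h ∈ 𝒞} Σ_i ∂φ/∂k_i(h)·k_i. Set m₁ = min{ ∂φ/∂k_i(h) : 1 ≤ i ≤ n, h ∈ 𝒞 } and m₂ = max{ ∂φ/∂k_i(h) : 1 ≤ i ≤ n, h ∈ 𝒞 }. Then m₁ > 0, and for every k ∈ ℝ^n and every l ∈ ℝ^n with l_i ≥ 0 for all i, one has m₁·|l| ≤ φ̃(k + l) − φ̃(k) ≤ √n·m₂·|l|, where |l| is the Euclidean norm. -/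
/-- `φ = H_m^(1/m)`. -/
noncomputable def phi (n m : ℕ) (k : Fin n → ℝ) : ℝ := Hm n m k ^ ((1 : ℝ) / m)

/-- The partial derivative `∂φ/∂k_i` at `h`. -/
noncomputable def phid (n m : ℕ) (h : Fin n → ℝ) (i : Fin n) : ℝ :=
  fderiv ℝ (phi n m) h (Pi.single i 1)

/-- The compact pinched cone slab `𝒞 = {k : H₀ ≤ H(k) ≤ H₁, k_i ≥ ε·H(k) ∀ i}`. -/
def cone (n : ℕ) (ε H₀ H₁ : ℝ) : Set (Fin n → ℝ) :=
  {k | H₀ ≤ ∑ i, k i ∧ (∑ i, k i) ≤ H₁ ∧ ∀ i, ε * (∑ j, k j) ≤ k i}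

/-- The Bellman-type extension `φ̃(k) = min_{h ∈ 𝒞} Σ_i ∂φ/∂k_i(h)·k_i`. -/
noncomputable def phiTilde (n m : ℕ) (ε H₀ H₁ : ℝ) (k : Fin n → ℝ) : ℝ :=
  sInf ((fun h => ∑ i, phid n m h i * k i) '' cone n ε H₀ H₁)

/-- `m₁ = min { ∂φ/∂k_i(h) : 1 ≤ i ≤ n, h ∈ 𝒞 }`. -/
noncomputable def mOne (n m : ℕ) (ε H₀ H₁ : ℝ) : ℝ :=
  sInf {x : ℝ | ∃ i : Fin n, ∃ h ∈ cone n ε H₀ H₁, x = phid n m h i}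

/-- `m₂ = max { ∂φ/∂k_i(h) : 1 ≤ i ≤ n, h ∈ 𝒞 }`. -/
noncomputable def mTwo (n m : ℕ) (ε H₀ H₁ : ℝ) : ℝ :=
  sSup {x : ℝ | ∃ i : Fin n, ∃ h ∈ cone n ε H₀ H₁, x = phid n m h i}

/-!
`φ̃` is the infimum over the compact set `𝒞` of the linear functions `k ↦ Σᵢ ∂ᵢφ(h) kᵢ`. Along a
direction `l ≥ 0` each of them increases by an amount between `m₁ Σᵢ lᵢ` and `m₂ Σᵢ lᵢ`, and these
bounds pass to the infimum; then `|l| ≤ Σᵢ lᵢ ≤ √n |l|`. On the positive cone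
`∂ᵢφ = (1/m) H_m^{1/m-1} ∂ᵢH_m` is continuous and positive, since `∂ᵢH_m` is a positive multiple
of a nonempty sum of products of the other coordinates; as `𝒞` is a compact subset of that cone, the
minimum `m₁` is attained and hence positive.
-/

open Finset
open scoped Nat

lemma sqrt_sum_sq_le_sum_s11 {ι : Type*} [Fintype ι] {l : ι → ℝ} (hl : 0 ≤ l) :
    √(∑ i, l i ^ 2) ≤ ∑ i, l i :=
  Real.sqrt_le_iff.mpr ⟨sum_nonneg fun i _ => hl i, sum_sq_le_sq_sum_of_nonneg fun i _ => hl i⟩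

lemma sum_le_sqrt_card_mul_sqrt_sum_sq {ι : Type*} [Fintype ι] (l : ι → ℝ) :
    ∑ i, l i ≤ √(Fintype.card ι) * √(∑ i, l i ^ 2) := by
  rw [← Real.sqrt_mul (Nat.cast_nonneg _)]
  exact (le_abs_self _).trans (Real.abs_le_sqrt (sq_sum_le_card_mul_sum_sq (s := univ)))

lemma const_dotProduct {ι : Type*} [Fintype ι] (a : ℝ) (l : ι → ℝ) :
    (fun _ => a) ⬝ᵥ l = a * ∑ i, l i := by
  simp only [dotProduct, mul_sum]

section InfPairing

variable {X ι : Type*} [Fintype ι] {C : Set X} {g : X → ι → ℝ}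

noncomputable def infPairing (C : Set X) (g : X → ι → ℝ) (k : ι → ℝ) : ℝ :=
  sInf ((fun h => g h ⬝ᵥ k) '' C)

lemma le_infPairing (hne : C.Nonempty) {a : ℝ} {k : ι → ℝ} (ha : ∀ h ∈ C, a ≤ g h ⬝ᵥ k) :
    a ≤ infPairing C g k :=
  le_csInf (hne.image _) (by rintro _ ⟨h, hh, rfl⟩; exact ha h hh)

variable [TopologicalSpace X]

lemma infPairing_le (hC : IsCompact C) (hg : ContinuousOn g C) {h : X} (hh : h ∈ C)
    (k : ι → ℝ) : infPairing C g k ≤ g h ⬝ᵥ k :=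
  csInf_le (hC.bddBelow_image ((continuous_id.dotProduct continuous_const).comp_continuousOn hg))
    ⟨h, hh, rfl⟩

lemma mul_sum_le_infPairing_add_sub (hC : IsCompact C) (hg : ContinuousOn g C)
    (hne : C.Nonempty) {a : ℝ} (ha : ∀ h ∈ C, ∀ i, a ≤ g h i) (k : ι → ℝ) {l : ι → ℝ}
    (hl : 0 ≤ l) : a * ∑ i, l i ≤ infPairing C g (k + l) - infPairing C g k := by
  suffices infPairing C g k + a * ∑ i, l i ≤ infPairing C g (k + l) by linarith
  refine le_infPairing hne fun h hh => ?_
  rw [dotProduct_add, ← const_dotProduct]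
  exact add_le_add (infPairing_le hC hg hh k)
    (dotProduct_le_dotProduct_of_nonneg_right (ha h hh) hl)

lemma infPairing_add_sub_le_mul_sum (hC : IsCompact C) (hg : ContinuousOn g C)
    (hne : C.Nonempty) {b : ℝ} (hb : ∀ h ∈ C, ∀ i, g h i ≤ b) (k : ι → ℝ) {l : ι → ℝ}
    (hl : 0 ≤ l) : infPairing C g (k + l) - infPairing C g k ≤ b * ∑ i, l i := by
  suffices infPairing C g (k + l) - b * ∑ i, l i ≤ infPairing C g k by linarith
  refine le_infPairing hne fun h hh => ?_
  have hgl : g h ⬝ᵥ l ≤ b * ∑ i, l i :=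
    const_dotProduct b l ▸ dotProduct_le_dotProduct_of_nonneg_right (hb h hh) hl
  linarith [infPairing_le hC hg hh (k + l), dotProduct_add (g h) k l]

lemma isCompact_setOf_exists_eq_apply (hC : IsCompact C) (hg : ContinuousOn g C) :
    IsCompact {x : ℝ | ∃ i, ∃ h ∈ C, x = g h i} := by
  convert isCompact_iUnion fun i => hC.image_of_continuousOn (continuousOn_apply i _ |>.comp hg
    (Set.mapsTo_univ _ _)) using 1
  ext x
  simp only [Set.mem_ofPred_eq, Set.mem_iUnion, Set.mem_image, eq_comm, Function.comp_apply]

end InfPairing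

lemma sum_powersetCard_filter_prod_erase_pos {ι : Type*} [Fintype ι] [DecidableEq ι]
    {f : ι → ℝ} (hf : ∀ j, 0 < f j) {m : ℕ} (hm : 1 ≤ m) (hmι : m ≤ Fintype.card ι) (i : ι) :
    0 < ∑ s ∈ powersetCard m univ with i ∈ s, ∏ j ∈ s.erase i, f j := by
  refine sum_pos (fun s _ => prod_pos fun j _ => hf j) ?_
  obtain ⟨t, hts, htm⟩ := exists_subset_card_eq (s := univ.erase i) (n := m - 1)
    (by rw [card_erase_of_mem (mem_univ i), card_univ]; omega)
  have hit : i ∉ t := fun hi => (mem_erase.mp (hts hi)).1 rfl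
  refine ⟨insert i t, mem_filter.mpr ⟨?_, mem_insert_self i t⟩⟩
  rw [mem_powersetCard_univ, card_insert_of_notMem hit, htm]
  omega

section Hm

variable {n m : ℕ}

lemma Hm_pos (hmn : m ≤ n) {h : Fin n → ℝ} (hh : ∀ j, 0 < h j) : 0 < Hm n m h := by
  refine mul_pos (by positivity) (sum_pos (fun s _ => prod_pos fun j _ => hh j) ?_)
  exact powersetCard_nonempty.mpr (by simpa using hmn)

lemma contDiff_Hm : ContDiff ℝ 1 (Hm n m) :=
  contDiff_const.mul (ContDiff.sum fun _ _ => contDiff_prod fun i _ => contDiff_apply ℝ ℝ i)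

lemma fderiv_Hm_single (h : Fin n → ℝ) (i : Fin n) :
    fderiv ℝ (Hm n m) h (Pi.single i 1) =
      ((m ! * (n - m)! : ℕ) : ℝ) / n ! *
        ∑ s ∈ powersetCard m univ with i ∈ s, ∏ j ∈ s.erase i, h j := by
  have hE : HasFDerivAt (Hm n m) ((((m ! * (n - m)! : ℕ) : ℝ) / n !) •
      ∑ s ∈ powersetCard m univ, ∑ a ∈ s,
        (∏ j ∈ s.erase a, h j) • (ContinuousLinearMap.proj a : (Fin n → ℝ) →L[ℝ] ℝ)) h :=
    (HasFDerivAt.fun_sum fun _ _ =>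
      HasFDerivAt.finsetProd fun a _ => hasFDerivAt_apply a h).const_mul _
  simp [hE.fderiv, Pi.single_apply, sum_filter]

lemma phid_eq_mul_fderiv_Hm (h : Fin n → ℝ) (hh : Hm n m h ≠ 0) (i : Fin n) :
    phid n m h i = 1 / m * Hm n m h ^ (1 / m - 1 : ℝ) * fderiv ℝ (Hm n m) h (Pi.single i 1) := by
  have hphi : HasFDerivAt (phi n m) _ h :=
    (Real.hasDerivAt_rpow_const (p := 1 / m) (Or.inl hh)).comp_hasFDerivAt h
      (contDiff_Hm.differentiable one_ne_zero h).hasFDerivAt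
  rw [phid, hphi.fderiv]
  simp

lemma phid_pos (hm : 1 ≤ m) (hmn : m ≤ n) {h : Fin n → ℝ} (hh : ∀ j, 0 < h j) (i : Fin n) :
    0 < phid n m h i := by
  have hH := Hm_pos hmn hh
  have hm₀ : (0 : ℝ) < m := by exact_mod_cast hm
  rw [phid_eq_mul_fderiv_Hm h hH.ne', fderiv_Hm_single]
  have := sum_powersetCard_filter_prod_erase_pos hh hm (by simpa using hmn) i
  positivity

lemma continuousOn_phid : ContinuousOn (phid n m) {h | 0 < Hm n m h} := by
  have hopen : IsOpen {h | 0 < Hm n m h} := isOpen_lt continuous_const contDiff_Hm.continuous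
  have hphi : ContDiffOn ℝ 1 (phi n m) {h | 0 < Hm n m h} := fun h hh =>
    ((Real.contDiffAt_rpow_const_of_ne hh.ne').comp h contDiff_Hm.contDiffAt).contDiffWithinAt
  exact continuousOn_pi.mpr fun i =>
    (hphi.continuousOn_fderiv_of_isOpen hopen le_rfl).clm_apply continuousOn_const

end Hm

section Cone

variable {n : ℕ} {ε H₀ H₁ : ℝ}

lemma cone_coord_pos (hH₀ : 0 < H₀) (hε : 0 < ε) {h : Fin n → ℝ} (hh : h ∈ cone n ε H₀ H₁)
    (j : Fin n) : 0 < h j :=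
  (mul_pos hε (hH₀.trans_le hh.1)).trans_le (hh.2.2 j)

lemma isCompact_cone (hH₀ : 0 ≤ H₀) (hε : 0 ≤ ε) : IsCompact (cone n ε H₀ H₁) := by
  have hsum : Continuous fun k : Fin n → ℝ => ∑ i, k i :=
    continuous_finsetSum _ fun i _ => continuous_apply i
  have hpinch : IsClosed {k : Fin n → ℝ | ∀ i, ε * ∑ j, k j ≤ k i} := by
    simp only [Set.ofPred_forall]
    exact isClosed_iInter fun i => isClosed_le (continuous_const.mul hsum) (continuous_apply i)
  have hclosed : IsClosed (cone n ε H₀ H₁) :=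
    (isClosed_le continuous_const hsum).inter ((isClosed_le hsum continuous_const).inter hpinch)
  refine (isCompact_Icc (a := 0) (b := fun _ => H₁)).of_isClosed_subset hclosed fun k hk => ?_
  have hk₀ : 0 ≤ k := fun i => (mul_nonneg hε (hH₀.trans hk.1)).trans (hk.2.2 i)
  exact ⟨hk₀, fun i => (single_le_sum (fun j _ => hk₀ j) (mem_univ i)).trans hk.2.1⟩

lemma cone_nonempty (hn : n ≠ 0) (hH₀ : 0 ≤ H₀) (hH : H₀ ≤ H₁) (hε : ε ≤ 1 / n) :
    (cone n ε H₀ H₁).Nonempty := by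
  have hsum : ∑ _i : Fin n, H₀ / n = H₀ := by
    rw [sum_const, card_univ, Fintype.card_fin, nsmul_eq_mul]
    field_simp
  refine ⟨fun _ => H₀ / n, hsum.ge, hsum.le.trans hH, fun _ => ?_⟩
  calc ε * ∑ _i : Fin n, H₀ / n = ε * H₀ := by rw [hsum]
    _ ≤ 1 / n * H₀ := mul_le_mul_of_nonneg_right hε hH₀
    _ = H₀ / n := by ring

end Cone

lemma phiTilde_eq_infPairing (n m : ℕ) (ε H₀ H₁ : ℝ) :
    phiTilde n m ε H₀ H₁ = infPairing (cone n ε H₀ H₁) (phid n m) :=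
  rfl

theorem stmt11_general (n m : ℕ) (hm1 : 1 ≤ m) (hmn : m ≤ n)
    (H₀ H₁ ε : ℝ) (hH0 : 0 < H₀) (hH01 : H₀ ≤ H₁) (hε1 : 0 < ε) (hε2 : ε ≤ 1 / n) :
    0 < mOne n m ε H₀ H₁ ∧
    ∀ k l : Fin n → ℝ, (∀ i, 0 ≤ l i) →
      mOne n m ε H₀ H₁ * Real.sqrt (∑ i, (l i) ^ 2) ≤
          phiTilde n m ε H₀ H₁ (k + l) - phiTilde n m ε H₀ H₁ k ∧
      phiTilde n m ε H₀ H₁ (k + l) - phiTilde n m ε H₀ H₁ k ≤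
          Real.sqrt n * mTwo n m ε H₀ H₁ * Real.sqrt (∑ i, (l i) ^ 2) := by
  set C := cone n ε H₀ H₁
  have hC : IsCompact C := isCompact_cone hH0.le hε1.le
  obtain ⟨h₀, hh₀⟩ : C.Nonempty := cone_nonempty (by omega) hH0.le hH01 hε2
  have hpos : ∀ h ∈ C, ∀ i, 0 < phid n m h i := fun h hh =>
    phid_pos hm1 hmn (cone_coord_pos hH0 hε1 hh)
  have hcont : ContinuousOn (phid n m) C := continuousOn_phid.mono fun h hh =>
    Hm_pos hmn (cone_coord_pos hH0 hε1 hh)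
  have hS := isCompact_setOf_exists_eq_apply hC hcont
  have i₀ : Fin n := ⟨0, by omega⟩
  have hSne : {x | ∃ i, ∃ h ∈ C, x = phid n m h i}.Nonempty := ⟨_, i₀, h₀, hh₀, rfl⟩
  have hm₁ : 0 < mOne n m ε H₀ H₁ := by
    obtain ⟨i, h, hh, hmin⟩ := hS.sInf_mem hSne
    rw [mOne, hmin]
    exact hpos h hh i
  have hle : ∀ h ∈ C, ∀ i, mOne n m ε H₀ H₁ ≤ phid n m h i := fun h hh i =>
    csInf_le hS.bddBelow ⟨i, h, hh, rfl⟩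
  have hge : ∀ h ∈ C, ∀ i, phid n m h i ≤ mTwo n m ε H₀ H₁ := fun h hh i =>
    le_csSup hS.bddAbove ⟨i, h, hh, rfl⟩
  have hm₂ : 0 ≤ mTwo n m ε H₀ H₁ := (hpos h₀ hh₀ i₀).le.trans (hge h₀ hh₀ i₀)
  refine ⟨hm₁, fun k l hl => ?_⟩
  rw [phiTilde_eq_infPairing]
  constructor
  · calc mOne n m ε H₀ H₁ * √(∑ i, l i ^ 2) ≤ mOne n m ε H₀ H₁ * ∑ i, l i :=
          mul_le_mul_of_nonneg_left (sqrt_sum_sq_le_sum_s11 hl) hm₁.le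
      _ ≤ _ := mul_sum_le_infPairing_add_sub hC hcont ⟨h₀, hh₀⟩ hle k hl
  · calc infPairing C (phid n m) (k + l) - infPairing C (phid n m) k
          ≤ mTwo n m ε H₀ H₁ * ∑ i, l i :=
          infPairing_add_sub_le_mul_sum hC hcont ⟨h₀, hh₀⟩ hge k hl
      _ ≤ mTwo n m ε H₀ H₁ * (√n * √(∑ i, l i ^ 2)) := by
          simpa using mul_le_mul_of_nonneg_left (sum_le_sqrt_card_mul_sqrt_sum_sq l) hm₂
      _ = √n * mTwo n m ε H₀ H₁ * √(∑ i, l i ^ 2) := by ring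

/-- Uniform ellipticity of the Bellman extension: `m₁ > 0` and for all `k` and all
`l ≥ 0` (componentwise), `m₁·|l| ≤ φ̃(k+l) − φ̃(k) ≤ √n·m₂·|l|`, with `|l|` the
Euclidean norm. -/
theorem stmt11 (n m : ℕ) (hn : 2 ≤ n) (hm1 : 1 ≤ m) (hmn : m ≤ n)
    (H₀ H₁ ε : ℝ) (hH0 : 0 < H₀) (hH01 : H₀ ≤ H₁) (hε1 : 0 < ε) (hε2 : ε ≤ 1 / n) :
    0 < mOne n m ε H₀ H₁ ∧
    ∀ k l : Fin n → ℝ, (∀ i, 0 ≤ l i) →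
      mOne n m ε H₀ H₁ * Real.sqrt (∑ i, (l i) ^ 2) ≤
          phiTilde n m ε H₀ H₁ (k + l) - phiTilde n m ε H₀ H₁ k ∧
      phiTilde n m ε H₀ H₁ (k + l) - phiTilde n m ε H₀ H₁ k ≤
          Real.sqrt n * mTwo n m ε H₀ H₁ * Real.sqrt (∑ i, (l i) ^ 2) :=
  stmt11_general n m hm1 hmn H₀ H₁ ε hH0 hH01 hε1 hε2
end
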